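/- arXiv:1510.04584 — 9 statements merged into one kernel-verified Lean document; each statement's English description precedes it below -/
import Mathlib

section
/- Let R be an idempotent semiring with no zero divisors. Then every invertible n×n matrix over R is a monomial matrix, i.e., GL(n,R) is isomorphic to the semidirect product of the symmetric group Σ_n acting on (R^×)^n. Equivalently, any two bases of the free module R^n differ only by a permutation and multiplication by units. -/
/-!
Idempotence makes `R` zero-sum-free, so in `M * N = 1` every off-diagonal summand
`M i k * N k j` vanishes. As `R` has no zero divisors, a nonzero entry `M i k` then forces row
`k` of `N` to be supported in column `i`, and the diagonal of `N * M = 1` gives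
`N k i * M i k = 1`. By the symmetry between `M` and `N`, every nonzero entry of `M` is a unit,
and each row and each column of `M` carries exactly one of them.
-/

open Finset

theorem eq_zero_of_add_eq_zero_of_add_self {R : Type*} [AddMonoid R] (hid : ∀ r : R, r + r = r)
    {a b : R} (h : a + b = 0) : a = 0 :=
  calc a = a + (a + b) := by rw [h, add_zero]
    _ = a + b := by rw [← add_assoc, hid]
    _ = 0 := h

theorem eq_zero_of_sum_eq_zero {R ι : Type*} [AddCommMonoid R]
    (hzs : ∀ a b : R, a + b = 0 → a = 0) {s : Finset ι} {f : ι → R} (h : ∑ x ∈ s, f x = 0)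
    {i : ι} (hi : i ∈ s) : f i = 0 := by
  classical exact hzs _ _ ((add_sum_erase s f hi).trans h)

namespace Matrix

variable {m n R : Type*} [Fintype n] [DecidableEq m] [Semiring R] {M : Matrix m n R}
  {N : Matrix n m R}

theorem exists_ne_zero_of_mul_eq_one [Nontrivial R] (h : M * N = 1) (i : m) :
    ∃ k, M i k ≠ 0 := by
  by_contra! hrow
  have : (M * N) i i = 0 := sum_eq_zero fun k _ => by simp [hrow k]
  simp [h] at this

theorem mul_apply_summand_eq_zero_of_mul_eq_one (hzs : ∀ a b : R, a + b = 0 → a = 0)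
    (h : M * N = 1) {i j : m} (hij : i ≠ j) (k : n) : M i k * N k j = 0 :=
  eq_zero_of_sum_eq_zero hzs (f := fun k => M i k * N k j)
    (by rw [← mul_apply, h, one_apply_ne hij]) (mem_univ k)

theorem eq_zero_of_mul_eq_one_of_ne_zero [NoZeroDivisors R]
    (hzs : ∀ a b : R, a + b = 0 → a = 0) (h : M * N = 1) {i j : m} {k : n} (hMik : M i k ≠ 0)
    (hji : j ≠ i) : N k j = 0 :=
  (mul_eq_zero.mp (mul_apply_summand_eq_zero_of_mul_eq_one hzs h hji.symm k)).resolve_left hMik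

theorem mul_apply_eq_one_of_ne_zero [Fintype m] [DecidableEq n] [NoZeroDivisors R]
    (hzs : ∀ a b : R, a + b = 0 → a = 0) (hMN : M * N = 1) (hNM : N * M = 1) {i : m} {k : n}
    (hMik : M i k ≠ 0) :
    N k i * M i k = 1 := by
  have hdiag : (N * M) k k = 1 := by rw [hNM, one_apply_eq]
  rwa [mul_apply, sum_eq_single i (fun j _ hji => by
    rw [eq_zero_of_mul_eq_one_of_ne_zero hzs hMN hMik hji, zero_mul]) (by simp)] at hdiag

theorem col_eq_of_apply_ne_zero [Fintype m] [DecidableEq n] [NoZeroDivisors R] [Nontrivial R]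
    (hzs : ∀ a b : R, a + b = 0 → a = 0) (hMN : M * N = 1) (hNM : N * M = 1) {i : m}
    {k l : n} (hMik : M i k ≠ 0) (hMil : M i l ≠ 0) : k = l := by
  by_contra hkl
  have hNli : N l i ≠ 0 :=
    left_ne_zero_of_mul_eq_one (mul_apply_eq_one_of_ne_zero hzs hMN hNM hMil)
  exact hMik (eq_zero_of_mul_eq_one_of_ne_zero hzs hNM hNli hkl)

theorem row_eq_of_apply_ne_zero [Fintype m] [DecidableEq n] [NoZeroDivisors R] [Nontrivial R]
    (hzs : ∀ a b : R, a + b = 0 → a = 0) (hMN : M * N = 1) (hNM : N * M = 1) {i i' : m}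
    {k : n} (hMik : M i k ≠ 0) (hMi'k : M i' k ≠ 0) : i = i' := by
  by_contra hii'
  exact left_ne_zero_of_mul_eq_one (mul_apply_eq_one_of_ne_zero hzs hMN hNM hMi'k)
    (eq_zero_of_mul_eq_one_of_ne_zero hzs hMN hMik (Ne.symm hii'))

theorem isUnit_apply_of_ne_zero [Fintype m] [DecidableEq n] [NoZeroDivisors R]
    (hzs : ∀ a b : R, a + b = 0 → a = 0) (hMN : M * N = 1) (hNM : N * M = 1) {i : m} {k : n}
    (hMik : M i k ≠ 0) :
    IsUnit (M i k) := by
  have hNkiM : N k i * M i k = 1 := mul_apply_eq_one_of_ne_zero hzs hMN hNM hMik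
  have hNki : N k i ≠ 0 := fun hN => hMik <| by
    rw [← one_mul (M i k), ← hNkiM, hN, zero_mul, zero_mul]
  exact isUnit_iff_exists.mpr ⟨N k i, mul_apply_eq_one_of_ne_zero hzs hNM hMN hNki, hNkiM⟩

end Matrix

/-- Over an idempotent semiring with no zero divisors, every invertible
`n × n` matrix is a monomial matrix: a permutation matrix scaled by units. This expresses
`GL(n,R) ≅ Σ_n ⋉ (R^×)^n`, equivalently that any two bases of `R^n` differ by a
permutation and multiplication by units. -/
theorem gl_of_idempotent_semiring_is_monomial {R : Type*} [Semiring R] [NoZeroDivisors R]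
    (hid : ∀ r : R, r + r = r) (n : ℕ)
    (M : Matrix (Fin n) (Fin n) R) (hM : IsUnit M) :
    ∃ (σ : Equiv.Perm (Fin n)) (u : Fin n → Rˣ),
      M = Matrix.of fun i j => if j = σ i then (u i : R) else 0 := by
  rcases subsingleton_or_nontrivial R with hR | hR
  · exact ⟨1, fun _ => 1, Subsingleton.elim _ _⟩
  obtain ⟨⟨M, N, hMN, hNM⟩, rfl⟩ := hM
  have hzs : ∀ a b : R, a + b = 0 → a = 0 := fun _ _ => eq_zero_of_add_eq_zero_of_add_self hid
  choose σ hσ using Matrix.exists_ne_zero_of_mul_eq_one hMN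
  have hσinj : Function.Injective σ := fun i i' hii' =>
    Matrix.row_eq_of_apply_ne_zero hzs hMN hNM (hσ i) (hii' ▸ hσ i')
  refine ⟨Equiv.ofBijective σ hσinj.bijective_of_finite,
    fun i => (Matrix.isUnit_apply_of_ne_zero hzs hMN hNM (hσ i)).unit, ?_⟩
  ext i j
  simp only [Matrix.of_apply, Equiv.ofBijective_apply, IsUnit.unit_spec]
  split_ifs with hj
  · rw [hj]
  · by_contra hMij
    exact hj (Matrix.col_eq_of_apply_ne_zero hzs hMN hNM hMij (hσ i))
end

section
/- Let S be an idempotent semifield and V = S^n free with basis e_1,…,e_n. The tropical Grassmann algebra ⋀V := Sym V / ⟨e_i² ∼ 0⟩ is graded, and its d-th graded component ⋀^d V is a free S-module of rank C(n,d) with basis {e_I := e_{i_1} ∧ ⋯ ∧ e_{i_d} : I = {i_1 < ⋯ < i_d} ⊆ [n]} for d ≤ n, and ⋀^d V = 0 for d > n. -/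
/-!
Dropping from a polynomial every monomial in which some variable occurs at least twice gives
its square-free part. This map is additive, and the square-free part of a product depends only
on the square-free parts of the factors, so having equal square-free parts is a ring congruence.
It identifies `e_i²` with `0`, and every polynomial is congruent modulo `e_i² ∼ 0` to its
square-free part, because each other monomial is a multiple of some `e_i²`. Hence the two
congruences coincide: the square-free monomials `e_I` form a basis of the quotient, and since
`e_I` has degree `|I|` a homogeneous polynomial of degree `d > n` is congruent to `0`.
-/

open MvPolynomial Finset

/-- The defining congruence of the tropical Grassmann algebra `⋀ V = Sym V / ⟨e_i² ∼ 0⟩`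
on `Sym V = S[x_1,…,x_n]`. -/
noncomputable def wedgeCon (S : Type*) [Semifield S] (n : ℕ) : RingCon (MvPolynomial (Fin n) S) :=
  ringConGen (fun p q => (∃ i, p = (X i) ^ 2) ∧ q = 0)

/-- The square-free polynomial `∑_I f(I) · e_I` attached to coefficients `f`. -/
noncomputable def sqFreeElt (S : Type*) [Semifield S] (n : ℕ) (f : Finset (Fin n) → S) :
    MvPolynomial (Fin n) S :=
  ∑ I : Finset (Fin n), C (f I) * ∏ i ∈ I, X i

namespace TropicalGrassmann

section SqFreePart

variable {σ R : Type*} [CommSemiring R]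

def IsSqFree (m : σ →₀ ℕ) : Prop := ∀ i, m i ≤ 1

instance : DecidablePred (IsSqFree (σ := σ)) := fun m =>
  decidable_of_iff (∀ i ∈ m.support, m i ≤ 1)
    ⟨fun h i => by by_cases hi : i ∈ m.support <;> simp_all, fun h i _ => h i⟩

lemma IsSqFree.of_add_eq {a b m : σ →₀ ℕ} (hm : IsSqFree m) (h : a + b = m) :
    IsSqFree a ∧ IsSqFree b :=
  ⟨fun i => le_trans (by simp [← h]) (hm i), fun i => le_trans (by simp [← h]) (hm i)⟩

noncomputable def sqFreePart (p : MvPolynomial σ R) : MvPolynomial σ R :=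
  AddMonoidAlgebra.ofCoeff ((AddMonoidAlgebra.coeff p).filter IsSqFree)

lemma coeff_sqFreePart (p : MvPolynomial σ R) (m : σ →₀ ℕ) :
    coeff m (sqFreePart p) = if IsSqFree m then coeff m p else 0 :=
  Finsupp.filter_apply _ _ _

lemma sqFreePart_add (p q : MvPolynomial σ R) :
    sqFreePart (p + q) = sqFreePart p + sqFreePart q := by
  ext m
  simp only [coeff_sqFreePart, coeff_add]
  split_ifs <;> simp

lemma sqFreePart_monomial (m : σ →₀ ℕ) (a : R) :
    sqFreePart (monomial m a) = if IsSqFree m then monomial m a else 0 := by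
  classical
  ext m'
  rw [coeff_sqFreePart, apply_ite (coeff m'), coeff_monomial, coeff_zero]
  split_ifs <;> simp_all

/-- Only square-free pairs of exponents contribute to a square-free coefficient of a product. -/
lemma sqFreePart_mul (p q : MvPolynomial σ R) :
    sqFreePart (p * q) = sqFreePart (sqFreePart p * sqFreePart q) := by
  classical
  ext m
  simp only [coeff_sqFreePart]
  split_ifs with hm
  · rw [coeff_mul, coeff_mul]
    refine Finset.sum_congr rfl fun x hx => ?_
    obtain ⟨h₁, h₂⟩ := hm.of_add_eq (mem_antidiagonal.mp hx)
    rw [coeff_sqFreePart, coeff_sqFreePart, if_pos h₁, if_pos h₂]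
  · rfl

noncomputable def sqFreeCon : RingCon (MvPolynomial σ R) where
  r p q := sqFreePart p = sqFreePart q
  iseqv := ⟨fun _ => rfl, Eq.symm, Eq.trans⟩
  add' h₁ h₂ := by rw [sqFreePart_add, sqFreePart_add, h₁, h₂]
  mul' h₁ h₂ := by rw [sqFreePart_mul, h₁, h₂, ← sqFreePart_mul]

lemma sqFreePart_X_sq (i : σ) : sqFreePart (X i ^ 2 : MvPolynomial σ R) = 0 := by
  classical
  rw [X_pow_eq_monomial, sqFreePart_monomial, if_neg fun h => by simpa using h i]

variable (σ R) in
noncomputable def squareCon : RingCon (MvPolynomial σ R) :=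
  ringConGen fun p q => (∃ i, p = X i ^ 2) ∧ q = 0

lemma squareCon_le_sqFreeCon : squareCon σ R ≤ sqFreeCon :=
  RingCon.ringConGen_le.mpr <| by
    rintro _ _ ⟨⟨i, rfl⟩, rfl⟩
    show sqFreePart _ = sqFreePart 0
    ext m
    simp [sqFreePart_X_sq, coeff_sqFreePart]

lemma squareCon_monomial_zero {m : σ →₀ ℕ} (hm : ¬IsSqFree m) (a : R) :
    squareCon σ R (monomial m a) 0 := by
  obtain ⟨i, hi⟩ : ∃ i, 1 < m i := by simpa [IsSqFree] using hm
  obtain ⟨q, hq⟩ : X i ^ 2 ∣ monomial m a := by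
    rw [X_pow_eq_monomial, monomial_dvd_monomial]
    exact ⟨Or.inr (Finsupp.single_le_iff.mpr hi), one_dvd a⟩
  have hsq : squareCon σ R (X i ^ 2) 0 := RingConGen.Rel.of _ _ ⟨⟨i, rfl⟩, rfl⟩
  simpa [hq] using (squareCon σ R).mul hsq ((squareCon σ R).refl q)

lemma squareCon_sqFreePart (p : MvPolynomial σ R) : squareCon σ R p (sqFreePart p) := by
  induction p using MvPolynomial.induction_on' with
  | monomial m a =>
    rw [sqFreePart_monomial]
    split_ifs with hm
    · exact (squareCon σ R).refl _
    · exact squareCon_monomial_zero hm a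
  | add p q hp hq =>
    rw [sqFreePart_add]
    exact (squareCon σ R).add hp hq

theorem squareCon_iff {p q : MvPolynomial σ R} :
    squareCon σ R p q ↔ sqFreePart p = sqFreePart q :=
  ⟨fun h => squareCon_le_sqFreeCon h, fun h =>
    ((squareCon_sqFreePart p).trans (h ▸ (squareCon_sqFreePart q).symm))⟩

end SqFreePart

section Exponent

variable {σ R : Type*} [CommSemiring R]

noncomputable def exponentOf (I : Finset σ) : σ →₀ ℕ := Finsupp.indicator I fun _ _ => 1

lemma exponentOf_apply [DecidableEq σ] (I : Finset σ) (i : σ) :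
    exponentOf I i = if i ∈ I then 1 else 0 := by
  simp [exponentOf, Finsupp.indicator_apply]

lemma isSqFree_exponentOf (I : Finset σ) : IsSqFree (exponentOf I) := by
  classical
  intro i
  rw [exponentOf_apply]
  split_ifs <;> simp

lemma support_exponentOf (I : Finset σ) : (exponentOf I).support = I := by
  classical
  ext i
  simp [exponentOf_apply]

lemma exponentOf_support {m : σ →₀ ℕ} (hm : IsSqFree m) : exponentOf m.support = m := by
  classical
  ext i
  have := hm i
  by_cases hi : m i = 0 <;> simp [exponentOf_apply, hi]
  omega

lemma degree_exponentOf (I : Finset σ) : (exponentOf I).degree = I.card := by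
  classical
  rw [Finsupp.degree_apply, support_exponentOf, card_eq_sum_ones]
  exact sum_congr rfl fun i hi => by rw [exponentOf_apply, if_pos hi]

lemma prod_X_eq_monomial_exponentOf (I : Finset σ) :
    ∏ i ∈ I, (X i : MvPolynomial σ R) = monomial (exponentOf I) 1 := by
  simpa [exponentOf] using prod_X_pow (R := R) (fun _ => 1) I

lemma _root_.MvPolynomial.IsHomogeneous.coeff_exponentOf_eq_zero {p : MvPolynomial σ R} {d : ℕ}
    (hp : p.IsHomogeneous d) {I : Finset σ} (hI : I.card ≠ d) : coeff (exponentOf I) p = 0 :=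
  hp.coeff_eq_zero (by rwa [degree_exponentOf])

end Exponent

section SqFreeElt

variable {S : Type*} [Semifield S] {n : ℕ}

lemma coeff_sqFreeElt (f : Finset (Fin n) → S) (m : Fin n →₀ ℕ) :
    coeff m (sqFreeElt S n f) = if IsSqFree m then f m.support else 0 := by
  simp only [sqFreeElt, prod_X_eq_monomial_exponentOf, C_mul_monomial, mul_one, coeff_sum,
    coeff_monomial]
  split_ifs with hm
  · have key (I : Finset (Fin n)) : exponentOf I = m ↔ m.support = I :=
      ⟨by rintro rfl; exact support_exponentOf I, by rintro rfl; exact exponentOf_support hm⟩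
    simp [key]
  · refine sum_eq_zero fun I _ => if_neg ?_
    rintro rfl
    exact hm (isSqFree_exponentOf I)

lemma coeff_exponentOf_sqFreeElt (f : Finset (Fin n) → S) (I : Finset (Fin n)) :
    coeff (exponentOf I) (sqFreeElt S n f) = f I := by
  rw [coeff_sqFreeElt, if_pos (isSqFree_exponentOf I), support_exponentOf]

lemma sqFreeElt_injective : Function.Injective (sqFreeElt S n) := fun f g h =>
  funext fun I => by
    rw [← coeff_exponentOf_sqFreeElt f, ← coeff_exponentOf_sqFreeElt g, h]

lemma sqFreePart_sqFreeElt (f : Finset (Fin n) → S) :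
    sqFreePart (sqFreeElt S n f) = sqFreeElt S n f := by
  ext m
  rw [coeff_sqFreePart, coeff_sqFreeElt]
  split_ifs <;> rfl

lemma sqFreeElt_coeff_exponentOf (p : MvPolynomial (Fin n) S) :
    sqFreeElt S n (fun I => coeff (exponentOf I) p) = sqFreePart p := by
  ext m
  rw [coeff_sqFreePart, coeff_sqFreeElt]
  split_ifs with hm
  · rw [exponentOf_support hm]
  · rfl

lemma sqFreeElt_zero : sqFreeElt S n 0 = 0 := by
  simp [sqFreeElt]

lemma wedgeCon_eq_squareCon : wedgeCon S n = squareCon (Fin n) S := rfl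

lemma wedgeCon_sqFreeElt_coeff_exponentOf (p : MvPolynomial (Fin n) S) :
    wedgeCon S n p (sqFreeElt S n fun I => coeff (exponentOf I) p) := by
  rw [sqFreeElt_coeff_exponentOf, wedgeCon_eq_squareCon]
  exact squareCon_sqFreePart p

end SqFreeElt

end TropicalGrassmann

open TropicalGrassmann

theorem tropicalGrassmann_graded_free_general {S : Type*} [Semifield S]
    (n d : ℕ) :
    (∀ f g : Finset (Fin n) → S,
        wedgeCon S n (sqFreeElt S n f) (sqFreeElt S n g) → f = g)
    ∧ (∀ p : MvPolynomial (Fin n) S, p.IsHomogeneous d →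
        ∃ f : Finset (Fin n) → S, (∀ I, I.card ≠ d → f I = 0)
          ∧ wedgeCon S n p (sqFreeElt S n f))
    ∧ Fintype.card {I : Finset (Fin n) // I.card = d} = n.choose d
    ∧ (d > n → ∀ p : MvPolynomial (Fin n) S, p.IsHomogeneous d → wedgeCon S n p 0) := by
  refine ⟨fun f g h => ?_, fun p hp => ⟨_, fun I => hp.coeff_exponentOf_eq_zero,
    wedgeCon_sqFreeElt_coeff_exponentOf p⟩, by rw [Fintype.card_finset_len, Fintype.card_fin],
    fun hd p hp => ?_⟩
  · rw [wedgeCon_eq_squareCon, squareCon_iff, sqFreePart_sqFreeElt, sqFreePart_sqFreeElt] at h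
    exact sqFreeElt_injective h
  · have hzero : (fun I : Finset (Fin n) => coeff (exponentOf I) p) = 0 := funext fun I =>
      hp.coeff_exponentOf_eq_zero ((I.card_le_univ.trans_eq (Fintype.card_fin n)).trans_lt hd).ne
    have h := wedgeCon_sqFreeElt_coeff_exponentOf p
    rwa [hzero, sqFreeElt_zero] at h

/-- the tropical Grassmann algebra `⋀ V` is graded with `d`-th component
`⋀^d V` free of rank `C(n,d)` on the basis `{e_I : |I| = d}` for `d ≤ n`, and zero for
`d > n`.  Concretely: (1) the square-free monomials `e_I` are linearly independent in the
quotient; (2) every homogeneous polynomial of degree `d` is congruent to an `S`-linear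
combination of the `e_I` with `|I| = d`; (3) there are `C(n,d)` such basis elements;
(4) if `d > n` every homogeneous polynomial of degree `d` is congruent to `0`. -/
theorem tropicalGrassmann_graded_free {S : Type*} [Semifield S]
    (hid : ∀ s : S, s + s = s) (n d : ℕ) :
    (∀ f g : Finset (Fin n) → S,
        wedgeCon S n (sqFreeElt S n f) (sqFreeElt S n g) → f = g)
    ∧ (∀ p : MvPolynomial (Fin n) S, p.IsHomogeneous d →
        ∃ f : Finset (Fin n) → S, (∀ I, I.card ≠ d → f I = 0)
          ∧ wedgeCon S n p (sqFreeElt S n f))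
    ∧ Fintype.card {I : Finset (Fin n) // I.card = d} = n.choose d
    ∧ (d > n → ∀ p : MvPolynomial (Fin n) S, p.IsHomogeneous d → wedgeCon S n p 0) :=
  tropicalGrassmann_graded_free_general n d
end

section
/- Let S be an idempotent semifield, V = S^n with basis e_1,…,e_n, and let v_j = Σ_{i=1}^n a_{ij} e_i for j = 1,…,d be elements of V. Then in the tropical Grassmann algebra ⋀^d V, the coefficient of e_I in v_1 ∧ ⋯ ∧ v_d equals the permanent of the d×d submatrix of (a_{ij}) with rows indexed by I, for each I ∈ C([n],d). -/
open MvPolynomial Finset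

/-!
Expanding `∏ⱼ ∑ᵢ aᵢⱼ eᵢ` gives a sum over all maps `f : [d] → [n]` of `∏ⱼ a_{f j, j} e_{f j}`.
Since `eᵢ² ∼ 0`, only injective `f` survive. An injective `f` factors uniquely as the increasing
enumeration of its image `I` composed with a permutation `σ`; as both sides have `n!/(n-d)!`
elements, injectivity of `(I, σ) ↦ f` suffices. Grouping by `I` leaves `perm(a_I) · e_I`.
-/

section

open Function

variable {Q : Type*} [CommSemiring Q] {α : Type*} [LinearOrder α] {d : ℕ}

theorem prod_eq_zero_of_not_injective {ι κ : Type*} [Fintype κ] {x : ι → Q}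
    (hx : ∀ i, x i * x i = 0) {f : κ → ι} (hf : ¬ Injective f) :
    ∏ j, x (f j) = 0 := by
  classical
  obtain ⟨j₁, j₂, hf₁₂, hne⟩ : ∃ j₁ j₂, f j₁ = f j₂ ∧ j₁ ≠ j₂ := by
    simpa [Injective] using hf
  rw [← mul_prod_erase univ _ (mem_univ j₁),
    ← mul_prod_erase _ _ (mem_erase.mpr ⟨hne.symm, mem_univ j₂⟩), ← mul_assoc, hf₁₂, hx,
    zero_mul]

theorem prod_sum_mul_eq_sum_embedding {ι κ : Type*} [Fintype ι] [DecidableEq ι]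
    [Fintype κ] [DecidableEq κ] {x : ι → Q} (hx : ∀ i, x i * x i = 0) (b : ι → κ → Q) :
    ∏ j, ∑ i, b i j * x i = ∑ f : κ ↪ ι, ∏ j, b (f j) j * x (f j) := by
  rw [Fintype.prod_sum, ← Fintype.sum_subtype_add_sum_subtype Injective,
    Fintype.sum_eq_zero (fun f : {f // ¬ Injective f} => _)
      fun f => by rw [prod_mul_distrib, prod_eq_zero_of_not_injective hx f.2, mul_zero],
    add_zero, ← (Equiv.subtypeInjectiveEquivEmbedding κ ι).sum_comp]
  rfl

def embeddingOfFinsetPerm (p : {I : Finset α // I.card = d} × Equiv.Perm (Fin d)) :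
    Fin d ↪ α :=
  p.2.toEmbedding.trans (p.1.1.orderEmbOfFin p.1.2).toEmbedding

@[simp]
theorem range_embeddingOfFinsetPerm (p : {I : Finset α // I.card = d} × Equiv.Perm (Fin d)) :
    Set.range (embeddingOfFinsetPerm p) = p.1.1 := by
  change Set.range (p.1.1.orderEmbOfFin p.1.2 ∘ p.2) = _
  rw [Set.range_comp, p.2.range_eq_univ, Set.image_univ, range_orderEmbOfFin]

theorem prod_orderEmbOfFin {M : Type*} [CommMonoid M] (f : α → M) (I : Finset α)
    (h : I.card = d) :
    ∏ k, f (I.orderEmbOfFin h k) = ∏ i ∈ I, f i := by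
  conv_rhs => rw [← I.map_orderEmbOfFin_univ h, prod_map]
  rfl

theorem embeddingOfFinsetPerm_injective :
    Injective (embeddingOfFinsetPerm : {I : Finset α // I.card = d} × Equiv.Perm (Fin d) → _) := by
  rintro ⟨⟨I, hI⟩, σ⟩ ⟨⟨J, hJ⟩, τ⟩ h
  have hIJ : I = J := by
    simpa using congrArg (fun f : Fin d ↪ α => Set.range f) h
  subst hIJ
  refine Prod.ext rfl (Equiv.ext fun k => (I.orderEmbOfFin hI).injective ?_)
  exact DFunLike.congr_fun h k

variable [Fintype α]

theorem embeddingOfFinsetPerm_bijective :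
    Bijective (embeddingOfFinsetPerm : {I : Finset α // I.card = d} × Equiv.Perm (Fin d) → _) := by
  rw [Fintype.bijective_iff_injective_and_card]
  refine ⟨embeddingOfFinsetPerm_injective, ?_⟩
  simp [Fintype.card_prod, Fintype.card_perm, Nat.descFactorial_eq_factorial_mul_choose, mul_comm]

theorem prod_sum_mul_eq_sum_permanent_mul_prod {x : α → Q}
    (hx : ∀ i, x i * x i = 0) (b : Matrix α (Fin d) Q) :
    ∏ j, ∑ i, b i j * x i =
      ∑ I : {I : Finset α // I.card = d},
        (b.submatrix (I.1.orderEmbOfFin I.2) id).permanent * ∏ i ∈ I.1, x i := by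
  rw [prod_sum_mul_eq_sum_embedding hx b,
    ← (Equiv.ofBijective _ embeddingOfFinsetPerm_bijective).sum_comp, Fintype.sum_prod_type]
  refine sum_congr rfl fun I _ => ?_
  rw [Matrix.permanent, sum_mul]
  refine sum_congr rfl fun σ _ => ?_
  rw [prod_mul_distrib, ← prod_orderEmbOfFin x I.1 I.2,
    ← Equiv.prod_comp σ fun k => x (I.1.orderEmbOfFin I.2 k)]
  rfl

end

theorem wedge_coefficients_are_permanents_general {S : Type*} [Semifield S]
    (n d : ℕ) (a : Matrix (Fin n) (Fin d) S) :
    wedgeCon S n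
      (∏ j : Fin d, ∑ i : Fin n, C (a i j) * X i)
      (∑ I : {I : Finset (Fin n) // I.card = d},
        C (∑ σ : Equiv.Perm (Fin d), ∏ j : Fin d, a (I.1.orderEmbOfFin I.2 (σ j)) j)
          * ∏ i ∈ I.1, X i) := by
  let π := (wedgeCon S n).mk'
  have hsq (i : Fin n) : π (X i) * π (X i) = 0 := by
    rw [← map_mul, ← sq]
    exact (RingCon.eq _).mpr (RingConGen.Rel.of _ _ ⟨⟨i, rfl⟩, rfl⟩)
  rw [← RingCon.eq]
  change π _ = π _
  simp only [map_prod, map_sum, map_mul]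
  exact prod_sum_mul_eq_sum_permanent_mul_prod hsq fun i j => π (C (a i j))

/-- if `v_j = ∑_i a_{ij} e_i` for `j = 1,…,d`, then in the tropical
Grassmann algebra `⋀^d V` the product `v_1 ∧ ⋯ ∧ v_d` equals `∑_I perm_I(a) · e_I`,
i.e. the coefficient of `e_I` is the permanent of the `d × d` submatrix of `(a_{ij})`
with rows indexed by `I`. -/
theorem wedge_coefficients_are_permanents {S : Type*} [Semifield S]
    (hid : ∀ s : S, s + s = s) (n d : ℕ) (a : Matrix (Fin n) (Fin d) S) :
    wedgeCon S n
      (∏ j : Fin d, ∑ i : Fin n, C (a i j) * X i)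
      (∑ I : {I : Finset (Fin n) // I.card = d},
        C (∑ σ : Equiv.Perm (Fin d), ∏ j : Fin d, a (I.1.orderEmbOfFin I.2 (σ j)) j)
          * ∏ i ∈ I.1, X i) :=
  wedge_coefficients_are_permanents_general n d a
end

section
/- Let S be an idempotent semifield, w ∈ ⋀^d V a tropical Plücker vector, and 1 ≤ d ≤ d' ≤ n. Then the elongation w' ∈ ⋀^{d'}V defined by w'_J = Σ_{I ⊆ J, |I| = d} w_I equals w ∧ (Σ_{|K| = d'−d} e_K), and in particular is a tropical Plücker vector whenever it is nonzero. -/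
open Finset

/-- The tropical Plücker relations for a rank-`d` tensor `w ∈ ⋀^d S^n`. -/
def TropPluckerRel {S : Type*} [Semifield S] (n d : ℕ) (w : Finset (Fin n) → S) : Prop :=
  ∀ A B : Finset (Fin n), A.card = d + 1 → B.card = d - 1 → ∀ p ∈ A \ B,
    ∑ i ∈ A \ B, w (A.erase i) * w (insert i B)
      = ∑ i ∈ (A \ B).erase p, w (A.erase i) * w (insert i B)

/-- The wedge product of multivectors in coordinates: `(w ∧ w')_K = ∑_{I⊆K, |I|=d} w_I w'_{K∖I}`. -/
def wedgeMul {S : Type*} [Semifield S] {n : ℕ} (d : ℕ)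
    (w w' : Finset (Fin n) → S) : Finset (Fin n) → S :=
  fun K => ∑ I ∈ K.powersetCard d, w I * w' (K \ I)

/-!
Over an idempotent semifield, `a ≤ b ↔ a + b = b` is a partial order in which a finite sum
is the supremum of its terms, so a tropical Plücker relation says that its pivot term is
bounded by the remaining ones. The elongation to rank `d + k` is the `k`-fold iterate of the
one-step elongation `v'_J = ∑_{j ∈ J} v_{J - j}` (on sets of the right size), so it suffices
that one step preserves the relations. Expanding the pivot term `v'_{A-p} v'_{B+p}` into monomials
`v_{A-p-x} v_{B+p-y}`, a single relation of `v` bounds each of them by the right-hand side `G`,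
except for `u = v_{A-α-β} v_B` with `α, β ∈ A ∩ B`: there one relation only gives `u ≤ t + G`
for a partner monomial `t`, and three more give `t u ≤ G u + G²`. Hence `u² ≤ G u + G²`, i.e.
`u (u + G) ≤ G (u + G)`, and cancelling `u + G` yields `u ≤ G`.
-/

section IdempotentOrder

variable {S : Type*} [AddCommMonoid S] [PartialOrder S] [CanonicallyOrderedAdd S]

theorem add_eq_right_of_le_of_idem (hid : ∀ s : S, s + s = s) {a b : S} (h : a ≤ b) :
    a + b = b := by
  obtain ⟨c, rfl⟩ := exists_add_of_le h
  rw [← add_assoc, hid]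

theorem add_le_of_idem (hid : ∀ s : S, s + s = s) {a b c : S} (ha : a ≤ c) (hb : b ≤ c) :
    a + b ≤ c :=
  (add_le_add ha hb).trans_eq (hid c)

theorem sum_le_of_idem (hid : ∀ s : S, s + s = s) {ι : Type*} {s : Finset ι} {f : ι → S}
    {c : S} (h : ∀ i ∈ s, f i ≤ c) : ∑ i ∈ s, f i ≤ c :=
  Finset.sum_induction f (· ≤ c) (fun _ _ => add_le_of_idem hid) zero_le h

end IdempotentOrder

theorem le_of_mul_self_le_of_idem {S : Type*} [CommSemiring S] [PartialOrder S]
    [CanonicallyOrderedAdd S] [IsRightCancelMulZero S] (hid : ∀ s : S, s + s = s) {u g : S}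
    (h : u * u ≤ g * u + g * g) : u ≤ g := by
  rcases eq_or_ne (u + g) 0 with h0 | h0
  · exact (add_eq_zero.1 h0).1 ▸ zero_le
  have hle : u * (u + g) ≤ g * (u + g) :=
    calc u * (u + g) = u * u + g * u := by ring
      _ ≤ g * u + g * g + g * u := by gcongr
      _ = g * (u + g) := by rw [add_right_comm, hid]; ring
  have hcancel : (u + g) * (u + g) = g * (u + g) := by
    rw [add_mul, add_eq_right_of_le_of_idem hid hle]
  exact mul_right_cancel₀ h0 hcancel ▸ le_self_add

section Plucker

variable {S : Type*} [Semifield S] {n e : ℕ}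

def pluckerRHS (v : Finset (Fin n) → S) (A B : Finset (Fin n)) (p : Fin n) : S :=
  ∑ i ∈ (A \ B).erase p, v (A.erase i) * v (insert i B)

def elongationStep (v : Finset (Fin n) → S) (J : Finset (Fin n)) : S :=
  ∑ j ∈ J, v (J.erase j)

def elongation (d : ℕ) (w : Finset (Fin n) → S) (J : Finset (Fin n)) : S :=
  ∑ I ∈ J.powersetCard d, w I

theorem TropPluckerRel.congr (he : 1 ≤ e) {f g : Finset (Fin n) → S}
    (h : ∀ K : Finset (Fin n), K.card = e → f K = g K) (hf : TropPluckerRel n e f) :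
    TropPluckerRel n e g := by
  intro A B hA hB p hp
  have hfg : ∀ i ∈ A \ B, g (A.erase i) * g (insert i B) = f (A.erase i) * f (insert i B) := by
    intro i hi
    rw [h (A.erase i) (by grind), h (insert i B) (by grind)]
  rw [sum_congr rfl hfg, sum_congr rfl fun i hi => hfg i (mem_of_mem_erase hi),
    hf A B hA hB p hp]

section Order

variable [PartialOrder S] [CanonicallyOrderedAdd S] {v : Finset (Fin n) → S}
  {A B : Finset (Fin n)} {p i l x y α β : Fin n}

theorem tropPluckerRel_of_le_pluckerRHS (hid : ∀ s : S, s + s = s)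
    (h : ∀ A B : Finset (Fin n), A.card = e + 1 → B.card = e - 1 → ∀ p ∈ A \ B,
      v (A.erase p) * v (insert p B) ≤ pluckerRHS v A B p) :
    TropPluckerRel n e v := by
  intro A B hA hB p hp
  rw [← add_sum_erase _ _ hp]
  exact add_eq_right_of_le_of_idem hid (h A B hA hB p hp)

theorem TropPluckerRel.mul_le_of_forall_le (hid : ∀ s : S, s + s = s)
    (hv : TropPluckerRel n e v) {a c : S} (hA : A.card = e + 1) (hB : B.card = e - 1)
    (hpA : p ∈ A) (hpB : p ∉ B)
    (h : ∀ i ∈ A, i ∉ B → i ≠ p → a * (v (A.erase i) * v (insert i B)) ≤ c) :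
    a * (v (A.erase p) * v (insert p B)) ≤ c := by
  have hp : p ∈ A \ B := mem_sdiff.2 ⟨hpA, hpB⟩
  calc a * (v (A.erase p) * v (insert p B))
      ≤ a * ∑ i ∈ A \ B, v (A.erase i) * v (insert i B) := by
        gcongr
        exact single_le_sum_of_canonicallyOrdered
          (f := fun i => v (A.erase i) * v (insert i B)) hp
    _ = a * ∑ i ∈ (A \ B).erase p, v (A.erase i) * v (insert i B) := by
        rw [hv A B hA hB p hp]
    _ ≤ c := by
        rw [mul_sum]
        refine sum_le_of_idem hid fun i hi => ?_
        obtain ⟨hip, hiA, hiB⟩ : i ≠ p ∧ i ∈ A ∧ i ∉ B := by simpa using hi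
        exact h i hiA hiB hip

theorem TropPluckerRel.le_of_forall_le (hid : ∀ s : S, s + s = s) (hv : TropPluckerRel n e v)
    {c : S} (hA : A.card = e + 1) (hB : B.card = e - 1) (hpA : p ∈ A) (hpB : p ∉ B)
    (h : ∀ i ∈ A, i ∉ B → i ≠ p → v (A.erase i) * v (insert i B) ≤ c) :
    v (A.erase p) * v (insert p B) ≤ c := by
  simpa using hv.mul_le_of_forall_le hid (a := 1) hA hB hpA hpB (by simpa using h)

theorem mul_le_pluckerRHS_elongationStep (hiA : i ∈ A) (hiB : i ∉ B) (hip : i ≠ p)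
    (hx : x ∈ A.erase i) (hy : y ∈ insert i B) :
    v ((A.erase i).erase x) * v ((insert i B).erase y) ≤
      pluckerRHS (elongationStep v) A B p :=
  (mul_le_mul' (single_le_sum_of_canonicallyOrdered hx)
    (single_le_sum_of_canonicallyOrdered hy)).trans
    (single_le_sum_of_canonicallyOrdered (f := fun i =>
      elongationStep v (A.erase i) * elongationStep v (insert i B)) (by simp [*]))

theorem mul_insert_erase_le_pluckerRHS_elongationStep (hiA : i ∈ A) (hiB : i ∉ B)
    (hip : i ≠ p) (hxA : x ∈ A) (hxi : x ≠ i) (hyB : y ∈ B) :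
    v ((A.erase x).erase i) * v (insert i (B.erase y)) ≤
      pluckerRHS (elongationStep v) A B p := by
  have hyi : i ≠ y := fun h => hiB (h ▸ hyB)
  rw [erase_right_comm, ← erase_insert_of_ne hyi]
  exact mul_le_pluckerRHS_elongationStep hiA hiB hip (mem_erase.2 ⟨hxi, hxA⟩)
    (mem_insert_of_mem hyB)

theorem mul_erase_le_pluckerRHS_elongationStep (hiA : i ∈ A) (hiB : i ∉ B)
    (hip : i ≠ p) (hxA : x ∈ A) (hxi : x ≠ i) :
    v ((A.erase i).erase x) * v B ≤ pluckerRHS (elongationStep v) A B p := by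
  simpa only [erase_insert hiB] using mul_le_pluckerRHS_elongationStep (v := v) (p := p) hiA hiB
    hip (mem_erase.2 ⟨hxi, hxA⟩) (mem_insert_self i B)

theorem mul_mul_le_pluckerRHS_sq (hid : ∀ s : S, s + s = s) (hv : TropPluckerRel n e v)
    (hB : B.card = e) (hαA : α ∈ A) (hαB : α ∈ B) (hβA : β ∈ A) (hβB : β ∈ B) (hαβ : α ≠ β)
    (hiA : i ∈ A) (hiB : i ∉ B) (hip : i ≠ p) (hlA : l ∈ A) (hlB : l ∉ B) (hlp : l ≠ p)
    (hil : i ≠ l) :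
    v ((A.erase α).erase l) * v ((A.erase β).erase i) *
        (v (insert i (insert l ((B.erase α).erase β))) * v B) ≤
      pluckerRHS (elongationStep v) A B p * pluckerRHS (elongationStep v) A B p := by
  set G := pluckerRHS (elongationStep v) A B p
  set A' := insert α (insert i (insert l ((B.erase α).erase β)))
  have hG : ∀ {j x y}, j ∈ A → j ∉ B → j ≠ p → x ∈ A → x ≠ j → y ∈ B →
      v ((A.erase x).erase j) * v (insert j (B.erase y)) ≤ G :=
    mul_insert_erase_le_pluckerRHS_elongationStep
  calc _ = v ((A.erase α).erase l) * v ((A.erase β).erase i) *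
        (v (A'.erase α) * v (insert α (B.erase α))) := by
        rw [insert_erase hαB, show A'.erase α = insert i (insert l ((B.erase α).erase β)) by grind]
    _ ≤ G * G := by
      refine hv.mul_le_of_forall_le hid (by grind) (by grind) (mem_insert_self _ _)
        (notMem_erase _ _) fun j hjA' hjB' hjα => ?_
      obtain rfl | rfl : j = i ∨ j = l := by grind
      · rw [show A'.erase j = insert l (B.erase β) by grind]
        calc _ = v ((A.erase α).erase l) * v (insert l (B.erase β)) *
              (v ((A.erase β).erase j) * v (insert j (B.erase α))) := by ring
          _ ≤ G * G := mul_le_mul' (hG hlA hlB hlp hαA (by grind) hβB)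
              (hG hiA hiB hip hβA (by grind) hαB)
      · rw [show A'.erase j = insert i (B.erase β) by grind]
        calc _ = v ((A.erase α).erase j) * v (insert j (B.erase α)) *
              (v ((A.erase β).erase i) * v (insert i (B.erase β))) := by ring
          _ ≤ G * G := mul_le_mul' (hG hlA hlB hlp hαA (by grind) hαB)
              (hG hiA hiB hip hβA (by grind) hβB)

theorem mul_mul_le_pluckerRHS_mul_add_sq (hid : ∀ s : S, s + s = s) (hv : TropPluckerRel n e v)
    (hA : A.card = e + 2) (hB : B.card = e) (hpA : p ∈ A) (hpB : p ∉ B) (hαA : α ∈ A)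
    (hαB : α ∈ B) (hβA : β ∈ A) (hβB : β ∈ B) (hαβ : α ≠ β) (hlA : l ∈ A) (hlB : l ∉ B)
    (hlp : l ≠ p) :
    v ((A.erase α).erase l) * v B *
        (v ((A.erase β).erase p) * v (insert p (insert l ((B.erase α).erase β)))) ≤
      pluckerRHS (elongationStep v) A B p * (v ((A.erase α).erase β) * v B) +
        pluckerRHS (elongationStep v) A B p * pluckerRHS (elongationStep v) A B p := by
  set G := pluckerRHS (elongationStep v) A B p
  -- the relation of `A - β` and `B - α - β + l` at the pivot `p`
  refine hv.mul_le_of_forall_le hid (by grind) (by grind) (by grind) (by grind)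
    fun i hiA' hiB' hip => ?_
  by_cases hiα : i = α
  · subst hiα
    calc _ = v ((A.erase i).erase l) * v (insert l (B.erase β)) *
          (v ((A.erase i).erase β) * v B) := by
          rw [erase_right_comm (a := β),
            show insert i (insert l ((B.erase i).erase β)) = insert l (B.erase β) by grind]
          ring
      _ ≤ G * (v ((A.erase i).erase β) * v B) := by
          gcongr
          exact mul_insert_erase_le_pluckerRHS_elongationStep hlA hlB hlp hαA (by grind) hβB
      _ ≤ _ := le_self_add
  · calc _ = v ((A.erase α).erase l) * v ((A.erase β).erase i) *
          (v (insert i (insert l ((B.erase α).erase β))) * v B) := by ring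
      _ ≤ G * G := mul_mul_le_pluckerRHS_sq hid hv hB hαA hαB hβA hβB hαβ (by grind) (by grind) hip
          hlA hlB hlp (by grind)
      _ ≤ _ := le_add_self

theorem mul_le_pluckerRHS_mul_add_sq (hid : ∀ s : S, s + s = s) (hv : TropPluckerRel n e v)
    (hA : A.card = e + 2) (hB : B.card = e) (hpA : p ∈ A) (hpB : p ∉ B) (hαA : α ∈ A)
    (hαB : α ∈ B) (hβA : β ∈ A) (hβB : β ∈ B) (hαβ : α ≠ β) :
    v ((A.erase β).erase p) * v (insert p (B.erase α)) * (v ((A.erase α).erase β) * v B) ≤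
      pluckerRHS (elongationStep v) A B p * (v ((A.erase α).erase β) * v B) +
        pluckerRHS (elongationStep v) A B p * pluckerRHS (elongationStep v) A B p := by
  calc _ = v ((A.erase β).erase p) * v B * (v ((A.erase α).erase β) *
        v (insert β (insert p ((B.erase α).erase β)))) := by
        rw [show insert β (insert p ((B.erase α).erase β)) = insert p (B.erase α) by grind]
        ring
    _ ≤ _ := by
      -- the relation of `A - α` and `B - α - β + p` at the pivot `β`
      refine hv.mul_le_of_forall_le hid (by grind) (by grind) (by grind) (by grind)
        fun l hlA' hlB' hlβ => ?_
      calc _ = v ((A.erase α).erase l) * v B *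
            (v ((A.erase β).erase p) * v (insert p (insert l ((B.erase α).erase β)))) := by
            rw [insert_comm]; ring
        _ ≤ _ := mul_mul_le_pluckerRHS_mul_add_sq hid hv hA hB hpA hpB hαA hαB hβA hβB hαβ
            (by grind) (by grind) (by grind)

theorem erase_erase_mul_le_pluckerRHS (hid : ∀ s : S, s + s = s) (hv : TropPluckerRel n e v)
    (hA : A.card = e + 2) (hB : B.card = e) (hpA : p ∈ A) (hpB : p ∉ B) (hαA : α ∈ A)
    (hαB : α ∈ B) (hβA : β ∈ A) (hβB : β ∈ B) (hαβ : α ≠ β) :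
    v ((A.erase α).erase β) * v B ≤ pluckerRHS (elongationStep v) A B p := by
  set G := pluckerRHS (elongationStep v) A B p
  set u := v ((A.erase α).erase β) * v B
  set t := v ((A.erase β).erase p) * v (insert p (B.erase α))
  have hu : u ≤ t + G :=
    calc u = v ((A.erase β).erase α) * v (insert α (B.erase α)) := by
          rw [erase_right_comm, insert_erase hαB]
      _ ≤ t + G := by
        refine hv.le_of_forall_le hid (by grind) (by grind) (by grind) (by grind)
          fun i hiA hiB hiα => ?_
        rcases eq_or_ne i p with rfl | hip
        · exact le_self_add
        · exact (mul_insert_erase_le_pluckerRHS_elongationStep (by grind) (by grind) hip hβA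
            (by grind) hαB).trans le_add_self
  refine le_of_mul_self_le_of_idem hid ?_
  calc u * u ≤ (t + G) * u := by gcongr
    _ = t * u + G * u := add_mul _ _ _
    _ ≤ G * u + G * G := add_le_of_idem hid
        (mul_le_pluckerRHS_mul_add_sq hid hv hA hB hpA hpB hαA hαB hβA hβB hαβ) le_self_add

theorem mul_le_pluckerRHS_elongationStep_pivot (hid : ∀ s : S, s + s = s)
    (hv : TropPluckerRel n e v) (hA : A.card = e + 2) (hB : B.card = e) (hpA : p ∈ A)
    (hpB : p ∉ B) (hx : x ∈ A.erase p) (hy : y ∈ insert p B) :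
    v ((A.erase p).erase x) * v ((insert p B).erase y) ≤
      pluckerRHS (elongationStep v) A B p := by
  obtain ⟨hxp, hxA⟩ := mem_erase.1 hx
  rcases mem_insert.1 hy with rfl | hyB
  · rw [erase_insert hpB]
    by_cases hxB : x ∈ B
    · calc _ = v ((A.erase y).erase x) * v (insert x (B.erase x)) := by rw [insert_erase hxB]
        _ ≤ _ := hv.le_of_forall_le hid (by grind) (by grind) hx (notMem_erase _ _)
            fun i hiA hiB hix => mul_insert_erase_le_pluckerRHS_elongationStep (by grind)
              (by grind) (by grind) hpA (by grind) hxB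
    · rw [erase_right_comm]
      exact mul_erase_le_pluckerRHS_elongationStep hxA hxB hxp hpA hxp.symm
  · calc _ = v ((A.erase x).erase p) * v (insert p (B.erase y)) := by
          rw [erase_right_comm, erase_insert_of_ne (by grind)]
      _ ≤ _ := by
        refine hv.le_of_forall_le hid (by grind) (by grind) (by grind) (by grind)
          fun i hiA hiB hip => ?_
        by_cases hiB' : i ∈ B
        · obtain rfl : i = y := by grind
          rw [insert_erase hiB']
          by_cases hxB : x ∈ B
          · exact erase_erase_mul_le_pluckerRHS hid hv hA hB hpA hpB hxA hxB (by grind) hiB'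
              (by grind)
          · exact mul_erase_le_pluckerRHS_elongationStep hxA hxB hxp (by grind) (by grind)
        · exact mul_insert_erase_le_pluckerRHS_elongationStep (by grind) hiB' hip hxA (by grind)
            hyB

end Order

theorem tropPluckerRel_elongationStep (hid : ∀ s : S, s + s = s) {v : Finset (Fin n) → S}
    (hv : TropPluckerRel n e v) : TropPluckerRel n (e + 1) (elongationStep v) := by
  let _ : IdemSemiring S := .ofSemiring hid
  refine tropPluckerRel_of_le_pluckerRHS hid fun A B hA hB p hp => ?_
  obtain ⟨hpA, hpB⟩ := mem_sdiff.1 hp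
  rw [elongationStep, elongationStep, sum_mul_sum]
  exact sum_le_of_idem hid fun x hx => sum_le_of_idem hid fun y hy =>
    mul_le_pluckerRHS_elongationStep_pivot hid hv hA (by omega) hpA hpB hx hy

theorem elongationStep_elongation (hid : ∀ s : S, s + s = s) {d : ℕ} (w : Finset (Fin n) → S)
    {K : Finset (Fin n)} (hK : d < K.card) :
    elongationStep (elongation d w) K = elongation d w K := by
  let _ : IdemSemiring S := .ofSemiring hid
  refine le_antisymm (sum_le_of_idem hid fun j _ => sum_le_of_idem hid fun I hI => ?_)
    (sum_le_of_idem hid fun I hI => ?_)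
  · exact single_le_sum_of_canonicallyOrdered (powersetCard_mono (erase_subset j K) hI)
  · obtain ⟨hIK, hIcard⟩ := mem_powersetCard.1 hI
    obtain ⟨j, hjK, hjI⟩ := exists_of_ssubset (ssubset_of_subset_of_ne hIK (by grind))
    calc w I ≤ elongation d w (K.erase j) := single_le_sum_of_canonicallyOrdered
          (mem_powersetCard.2 ⟨subset_erase.2 ⟨hIK, hjI⟩, hIcard⟩)
      _ ≤ elongationStep (elongation d w) K :=
          single_le_sum_of_canonicallyOrdered (f := fun j => elongation d w (K.erase j)) hjK

theorem tropPluckerRel_elongation (hid : ∀ s : S, s + s = s) {d : ℕ} (hd : 1 ≤ d)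
    {w : Finset (Fin n) → S} (hw : TropPluckerRel n d w) (k : ℕ) :
    TropPluckerRel n (d + k) (elongation d w) := by
  induction k with
  | zero =>
    exact hw.congr hd fun K hK => by rw [elongation, ← hK, powersetCard_self, sum_singleton]
  | succ k ih =>
    exact (tropPluckerRel_elongationStep hid ih).congr (by omega) fun K hK =>
      elongationStep_elongation hid w (by omega)

theorem elongation_eq_wedgeMul (d : ℕ) (w : Finset (Fin n) → S) {d' : ℕ} {J : Finset (Fin n)}
    (hJ : J.card = d') :
    elongation d w J = wedgeMul d w (fun K => if K.card = d' - d then 1 else 0) J :=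
  sum_congr rfl fun I hI => by
    obtain ⟨hIJ, hIcard⟩ := mem_powersetCard.1 hI
    show w I = w I * if (J \ I).card = d' - d then 1 else 0
    rw [card_sdiff_of_subset hIJ, hIcard, hJ, if_pos rfl, mul_one]

end Plucker

theorem elongation_eq_wedge_with_uniform_general {S : Type*} [Semifield S]
    (hid : ∀ s : S, s + s = s) (n d d' : ℕ) (hd : 1 ≤ d) (hdd' : d ≤ d')
    (w : Finset (Fin n) → S)
    (hpl : TropPluckerRel n d w) :
    (∀ J : Finset (Fin n), J.card = d' →
        (∑ I ∈ J.powersetCard d, w I)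
          = wedgeMul d w (fun K => if K.card = d' - d then (1 : S) else 0) J)
    ∧ ((∃ J : Finset (Fin n), J.card = d' ∧ (∑ I ∈ J.powersetCard d, w I) ≠ 0) →
        TropPluckerRel n d' (fun J => ∑ I ∈ J.powersetCard d, w I)) := by
  refine ⟨fun J hJ => elongation_eq_wedgeMul d w hJ, fun _ => ?_⟩
  obtain ⟨k, rfl⟩ := Nat.exists_eq_add_of_le hdd'
  exact tropPluckerRel_elongation hid hd hpl k

/-- the elongation `w'_J = ∑_{I ⊆ J, |I| = d} w_I` of a tropical Plücker
vector `w` of rank `d` to rank `d'` equals `w ∧ (∑_{|K| = d'−d} e_K)` (on sets of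
cardinality `d'`), and in particular it is a tropical Plücker vector whenever nonzero. -/
theorem elongation_eq_wedge_with_uniform {S : Type*} [Semifield S]
    (hid : ∀ s : S, s + s = s) (n d d' : ℕ) (hd : 1 ≤ d) (hdd' : d ≤ d') (hd'n : d' ≤ n)
    (w : Finset (Fin n) → S)
    (hw : ∃ I : Finset (Fin n), I.card = d ∧ w I ≠ 0)
    (hpl : TropPluckerRel n d w) :
    (∀ J : Finset (Fin n), J.card = d' →
        (∑ I ∈ J.powersetCard d, w I)
          = wedgeMul d w (fun K => if K.card = d' - d then (1 : S) else 0) J)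
    ∧ ((∃ J : Finset (Fin n), J.card = d' ∧ (∑ I ∈ J.powersetCard d, w I) ≠ 0) →
        TropPluckerRel n d' (fun J => ∑ I ∈ J.powersetCard d, w I)) :=
  elongation_eq_wedge_with_uniform_general hid n d d' hd hdd' w hpl
end

section
/- Let S be an idempotent semifield, w ∈ ⋀^d V nonzero, and Q_w = V^∨ / B(−∧w) the quotient by the bend relations of wedge multiplication by w. Then ⋀^d Q_w is presented as the quotient of ⋀^d V^∨ by the congruence generated by the bend relations of the expressions Σ_{i ∈ A∖B} w_{A−i} x_{B+i}, for A ∈ C([n],d+1) and B ∈ C([n],d−1). In particular, taking B = A∖{p,q} yields the relation w_{A−p} x_{A−q} = w_{A−q} x_{A−p} in ⋀^d Q_w. -/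
open Finset

/-- The `S`-module congruence generated by a relation `r`: the smallest equivalence
relation containing `r` and compatible with addition and scalar multiplication. -/
inductive ModCongr (S : Type*) [Semiring S] {M : Type*} [AddCommMonoid M] [Module S M]
    (r : M → M → Prop) : M → M → Prop
  | of {x y} : r x y → ModCongr S r x y
  | refl (x) : ModCongr S r x x
  | symm {x y} : ModCongr S r x y → ModCongr S r y x
  | trans {x y z} : ModCongr S r x y → ModCongr S r y z → ModCongr S r x z
  | add {x y x' y'} : ModCongr S r x y → ModCongr S r x' y' →
      ModCongr S r (x + x') (y + y')
  | smul (s : S) {x y} : ModCongr S r x y → ModCongr S r (s • x) (s • y)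

/-- Index type for the standard basis of `⋀^d S^n`: `d`-element subsets of `[n]`. -/
abbrev WIdx (n d : ℕ) := {I : Finset (Fin n) // I.card = d}

/-- The element `x_B ∧ (∑_{i ∈ T} w_{J−i} x_i)` of `⋀^d (S^n)^∨` in coordinates:
its `K`-coordinate is `∑_{i ∈ T∖B, K = B+i} w_{J−i}`. -/
def wedgeElt {S : Type*} [Semifield S] {n : ℕ} (d : ℕ) (w : Finset (Fin n) → S)
    (T J B : Finset (Fin n)) : WIdx n d → S :=
  fun K => ∑ i ∈ T \ B, if K.1 = insert i B then w (J.erase i) else 0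

/-- The generating relations of the congruence presenting `⋀^d Q_w` as a quotient of
`⋀^d (S^n)^∨`: the bend relations of the circuit forms `α_J = ∑_{i∈J} w_{J−i} x_i`
(`J ∈ C([n],d+1)`), wedged with square-free monomials `x_B` of degree `d−1`. -/
def WedgeBendRel {S : Type*} [Semifield S] (n d : ℕ) (w : Finset (Fin n) → S) :
    (WIdx n d → S) → (WIdx n d → S) → Prop :=
  fun p q => ∃ J B : Finset (Fin n), ∃ j ∈ J, J.card = d + 1 ∧ B.card = d - 1 ∧
    p = wedgeElt d w J J B ∧ q = wedgeElt d w (J.erase j) J B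

/-- The basis vector `x_I` of `⋀^d (S^n)^∨` in coordinates. -/
def deltaVec (S : Type*) [Semifield S] (n d : ℕ) (I : Finset (Fin n)) : WIdx n d → S :=
  fun K => if K.1 = I then 1 else 0

/-- The bend relations of the expressions `∑_{i ∈ A∖B} w_{A−i} x_{B+i}` for
`A ∈ C([n],d+1)`, `B ∈ C([n],d−1)`: any single term `l ∈ A∖B` may be dropped. -/
def ExprBendRel {S : Type*} [Semifield S] (n d : ℕ) (w : Finset (Fin n) → S) :
    (WIdx n d → S) → (WIdx n d → S) → Prop :=
  fun p q => ∃ A B : Finset (Fin n), ∃ l ∈ A \ B, A.card = d + 1 ∧ B.card = d - 1 ∧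
    p = wedgeElt d w A A B ∧ q = wedgeElt d w (A.erase l) A B

/-! A bend relation of `x_B ∧ α_J` that drops an index `j ∈ B` is trivial, because
`x_B ∧ x_j = 0` means the dropped term is absent to begin with; the remaining generators
are exactly the bend relations of the expressions `∑_{i ∈ A∖B} w_{A−i} x_{B+i}`.
For `B = A∖{p,q}` such an expression has only the two terms `w_{A−p} x_{A−q}` and
`w_{A−q} x_{A−p}`, and its two bend relations identify each of them with the sum. -/

theorem ModCongr.mono {S : Type*} [Semiring S] {M : Type*} [AddCommMonoid M] [Module S M]
    {r r' : M → M → Prop} (h : ∀ x y, r x y → ModCongr S r' x y) {x y : M}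
    (hxy : ModCongr S r x y) : ModCongr S r' x y := by
  induction hxy with
  | of hr => exact h _ _ hr
  | refl x => exact .refl x
  | symm _ ih => exact ih.symm
  | trans _ _ ih₁ ih₂ => exact ih₁.trans ih₂
  | add _ _ ih₁ ih₂ => exact ih₁.add ih₂
  | smul s _ ih => exact ih.smul s

section wedgeElt

variable {S : Type*} [Semifield S] {n : ℕ} (d : ℕ) (w : Finset (Fin n) → S)

theorem wedgeElt_erase_of_mem {J B : Finset (Fin n)} {j : Fin n} (hj : j ∈ B) :
    wedgeElt d w (J.erase j) J B = wedgeElt d w J J B := by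
  have hj' : j ∉ J \ B := fun h => (mem_sdiff.mp h).2 hj
  unfold wedgeElt
  rw [erase_sdiff_comm, erase_eq_of_notMem hj']

theorem wedgeElt_erase_eq_smul_deltaVec {A : Finset (Fin n)} {p q : Fin n}
    (hp : p ∈ A) (hpq : p ≠ q) :
    wedgeElt d w (A.erase q) A ((A.erase p).erase q)
      = w (A.erase p) • deltaVec S n d (A.erase q) := by
  have hpA : p ∈ A.erase q := mem_erase.mpr ⟨hpq, hp⟩
  funext K
  rw [erase_right_comm (a := p)]
  simp [wedgeElt, deltaVec, sdiff_erase_self hpA, insert_erase hpA]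

end wedgeElt

theorem modCongr_exprBendRel_of_wedgeBendRel {S : Type*} [Semifield S] {n d : ℕ}
    {w : Finset (Fin n) → S} {x y : WIdx n d → S} (h : WedgeBendRel n d w x y) :
    ModCongr S (ExprBendRel n d w) x y := by
  obtain ⟨J, B, j, hj, hJ, hB, rfl, rfl⟩ := h
  by_cases hjB : j ∈ B
  · rw [wedgeElt_erase_of_mem d w hjB]
    exact .refl _
  · exact .of ⟨J, B, j, mem_sdiff.mpr ⟨hj, hjB⟩, hJ, hB, rfl, rfl⟩

theorem wedgeBendRel_of_exprBendRel {S : Type*} [Semifield S] {n d : ℕ}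
    {w : Finset (Fin n) → S} {x y : WIdx n d → S} (h : ExprBendRel n d w x y) :
    WedgeBendRel n d w x y :=
  let ⟨A, B, l, hl, hA, hB, hx, hy⟩ := h
  ⟨A, B, l, (mem_sdiff.mp hl).1, hA, hB, hx, hy⟩

theorem modCongr_wedgeBendRel_swap {S : Type*} [Semifield S] {n d : ℕ}
    (w : Finset (Fin n) → S) {A : Finset (Fin n)} (hA : A.card = d + 1) {p q : Fin n}
    (hp : p ∈ A) (hq : q ∈ A) (hpq : p ≠ q) :
    ModCongr S (WedgeBendRel n d w)
      (w (A.erase p) • deltaVec S n d (A.erase q))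
      (w (A.erase q) • deltaVec S n d (A.erase p)) := by
  set B := (A.erase p).erase q with hB
  have hBcard : B.card = d - 1 := by
    rw [hB, card_erase_of_mem (mem_erase.mpr ⟨hpq.symm, hq⟩),
      card_erase_of_mem hp, hA]
    rfl
  have drop_q : ModCongr S (WedgeBendRel n d w)
      (wedgeElt d w A A B) (w (A.erase p) • deltaVec S n d (A.erase q)) := by
    rw [← wedgeElt_erase_eq_smul_deltaVec d w hp hpq]
    exact .of ⟨A, B, q, hq, hA, hBcard, rfl, rfl⟩
  have drop_p : ModCongr S (WedgeBendRel n d w)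
      (wedgeElt d w A A B) (w (A.erase q) • deltaVec S n d (A.erase p)) := by
    rw [← wedgeElt_erase_eq_smul_deltaVec d w hq hpq.symm, ← erase_right_comm]
    exact .of ⟨A, B, p, hp, hA, hBcard, rfl, rfl⟩
  exact drop_q.symm.trans drop_p

theorem top_wedge_Qw_presentation_general {S : Type*} [Semifield S]
    (n d : ℕ) (w : Finset (Fin n) → S) :
    (∀ p q : WIdx n d → S,
        ModCongr S (WedgeBendRel n d w) p q ↔ ModCongr S (ExprBendRel n d w) p q)
    ∧ (∀ A : Finset (Fin n), A.card = d + 1 → ∀ p ∈ A, ∀ q ∈ A, p ≠ q →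
        ModCongr S (WedgeBendRel n d w)
          (w (A.erase p) • deltaVec S n d (A.erase q))
          (w (A.erase q) • deltaVec S n d (A.erase p))) :=
  ⟨fun _ _ => ⟨ModCongr.mono fun _ _ => modCongr_exprBendRel_of_wedgeBendRel,
      ModCongr.mono fun _ _ h => .of (wedgeBendRel_of_exprBendRel h)⟩,
    fun _ hA _ hp _ hq hpq => modCongr_wedgeBendRel_swap w hA hp hq hpq⟩

/-- `⋀^d Q_w` is presented as the quotient of `⋀^d (S^n)^∨` by the
congruence generated by the bend relations of the expressions
`∑_{i∈A∖B} w_{A−i} x_{B+i}` (`A ∈ C([n],d+1)`, `B ∈ C([n],d−1)`): this congruence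
coincides with the defining congruence of `⋀^d Q_w`.  In particular, taking
`B = A∖{p,q}` yields the relation `w_{A−p} x_{A−q} = w_{A−q} x_{A−p}` in `⋀^d Q_w`. -/
theorem top_wedge_Qw_presentation {S : Type*} [Semifield S]
    (hid : ∀ s : S, s + s = s) (n d : ℕ) (w : Finset (Fin n) → S)
    (hw : ∃ I : Finset (Fin n), I.card = d ∧ w I ≠ 0) :
    (∀ p q : WIdx n d → S,
        ModCongr S (WedgeBendRel n d w) p q ↔ ModCongr S (ExprBendRel n d w) p q)
    ∧ (∀ A : Finset (Fin n), A.card = d + 1 → ∀ p ∈ A, ∀ q ∈ A, p ≠ q →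
        ModCongr S (WedgeBendRel n d w)
          (w (A.erase p) • deltaVec S n d (A.erase q))
          (w (A.erase q) • deltaVec S n d (A.erase p))) :=
  top_wedge_Qw_presentation_general n d w
end

section
/- Let S be an idempotent semifield and w = Σ w_I e_I ∈ ⋀^d V nonzero, with Q_w = V^∨/B(−∧w). In ⋀^d Q_w, if w_I = 0 then the image of x_I is 0; conversely, if at least one x_J is nonzero in ⋀^d Q_w, then x_I = 0 in ⋀^d Q_w implies w_I = 0. -/
open Finset

/-!
Each bend relation `x_B ∧ α_J` with `j ∈ J` says that the term `w_{J−j} x_{B+j}` may be dropped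
from `x_B ∧ α_J`. Starting from a fixed `K` with `w_K ≠ 0`, walk from `x_I` towards `x_K` by
single exchanges `I ↦ I − j + i` (`j ∈ I ∖ K`, `i ∈ K ∖ I`). For `B = I − j` and `J = K + j` the
relation gives `w_K x_I ≡ Σ_{i ∈ K∖I} w_{K+j−i} x_{I−j+i}`, so `x_I ≡ 0` as soon as all its
neighbours vanish; for `J = I + i` and `w_I = 0` it gives `w_{I−j+i} x_I ≡ 0`, which handles the
neighbours with nonzero weight. Induction on `|I ∖ K|` gives the first part, and the same
induction started from a vanishing `x_I` with `w_I ≠ 0` kills every `x_J`, which is the second.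
-/

theorem Finset.induction_on_exchange {α : Type*} [DecidableEq α] {K : Finset α}
    {p : Finset α → Prop} (base : p K)
    (step : ∀ I : Finset α, I.card = K.card → ∀ j ∈ I \ K,
      (∀ i ∈ K \ I, p (insert i (I.erase j))) → p I) :
    ∀ I : Finset α, I.card = K.card → p I := by
  suffices h : ∀ r : ℕ, ∀ I : Finset α, I.card = K.card → (I \ K).card = r → p I from
    fun I hI => h _ I hI rfl
  intro r
  induction r with
  | zero =>
    intro I hI hr
    have hIK : I ⊆ K := sdiff_eq_empty_iff_subset.1 (card_eq_zero.1 hr)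
    exact eq_of_subset_of_card_le hIK hI.ge ▸ base
  | succ r ih =>
    intro I hI hr
    obtain ⟨j, hj⟩ : (I \ K).Nonempty := card_pos.1 (by omega)
    obtain ⟨hjI, hjK⟩ := mem_sdiff.1 hj
    refine step I hI j hj fun i hi => ?_
    obtain ⟨hiK, hiI⟩ := mem_sdiff.1 hi
    have hiI' : i ∉ I.erase j := fun h => hiI (mem_of_mem_erase h)
    apply ih
    · rw [card_insert_of_notMem hiI', card_erase_add_one hjI, hI]
    · rw [insert_sdiff_of_mem _ hiK, erase_sdiff_comm, card_erase_of_mem hj, hr,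
        Nat.add_sub_cancel]

namespace ModCongr

variable {S M : Type*} [AddCommMonoid M] {r : M → M → Prop}

theorem smul_congr_zero [Semiring S] [Module S M] {x : M} (h : ModCongr S r x 0) (c : S) :
    ModCongr S r (c • x) 0 := by
  simpa using h.smul c

theorem congr_zero_of_smul [DivisionSemiring S] [Module S M] {x : M} {c : S} (hc : c ≠ 0)
    (h : ModCongr S r (c • x) 0) : ModCongr S r x 0 := by
  simpa [smul_smul, inv_mul_cancel₀ hc] using h.smul_congr_zero c⁻¹

theorem sum_congr_zero [Semiring S] [Module S M] {ι : Type*} (s : Finset ι) {f : ι → M}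
    (h : ∀ i ∈ s, ModCongr S r (f i) 0) : ModCongr S r (∑ i ∈ s, f i) 0 := by
  induction s using Finset.cons_induction with
  | empty => exact ModCongr.refl 0
  | cons a s ha ih =>
    rw [sum_cons, ← add_zero 0]
    exact (h a (mem_cons_self a s)).add (ih fun i hi => h i (mem_cons_of_mem hi))

end ModCongr

section WedgeBend

variable {S : Type*} [Semifield S] {n d : ℕ} {w : Finset (Fin n) → S}

local notation "Cng" => ModCongr S (WedgeBendRel n d w)

theorem wedgeElt_eq_sum (T J B : Finset (Fin n)) :
    wedgeElt d w T J B = ∑ i ∈ T \ B, w (J.erase i) • deltaVec S n d (insert i B) := by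
  funext K
  simp [wedgeElt, deltaVec, Finset.sum_apply]

theorem smul_deltaVec_add_congr_of_bend {J B : Finset (Fin n)} {j : Fin n}
    (hJ : J.card = d + 1) (hB : B.card = d - 1) (hj : j ∈ J) (hjB : j ∉ B) :
    Cng (w (J.erase j) • deltaVec S n d (insert j B)
        + ∑ i ∈ J.erase j \ B, w (J.erase i) • deltaVec S n d (insert i B))
      (∑ i ∈ J.erase j \ B, w (J.erase i) • deltaVec S n d (insert i B)) := by
  have h : Cng (wedgeElt d w J J B) (wedgeElt d w (J.erase j) J B) :=
    .of ⟨J, B, j, hj, hJ, hB, rfl, rfl⟩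
  rwa [wedgeElt_eq_sum, wedgeElt_eq_sum,
    ← add_sum_erase (J \ B) _ (mem_sdiff.2 ⟨hj, hjB⟩), ← erase_sdiff_comm] at h

theorem deltaVec_congr_zero_of_exchange_ne_zero {I : Finset (Fin n)} (hI : I.card = d)
    {j k : Fin n} (hj : j ∈ I) (hk : k ∉ I) (hwI : w I = 0)
    (hw : w (insert k (I.erase j)) ≠ 0) : Cng (deltaVec S n d I) 0 := by
  have hjk : j ≠ k := fun h => hk (h ▸ hj)
  have hkB : k ∉ I.erase j := fun h => hk (mem_of_mem_erase h)
  have h := smul_deltaVec_add_congr_of_bend (w := w) (J := insert k I) (B := I.erase j)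
    (by rw [card_insert_of_notMem hk, hI]) (by rw [card_erase_of_mem hj, hI])
    (mem_insert_of_mem hj) (notMem_erase j I)
  rw [erase_insert_of_ne hjk.symm, insert_erase hj, insert_sdiff_of_notMem _ hkB,
    Finset.sdiff_self, insert_empty, sum_singleton, erase_insert hk, hwI, zero_smul, add_zero] at h
  exact ModCongr.congr_zero_of_smul hw h

theorem deltaVec_congr_zero_of_exchanges {I K : Finset (Fin n)} (hI : I.card = d)
    (hK : K.card = d) (hwK : w K ≠ 0) {j : Fin n} (hj : j ∈ I \ K)
    (hexch : ∀ i ∈ K \ I, Cng (deltaVec S n d (insert i (I.erase j))) 0) :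
    Cng (deltaVec S n d I) 0 := by
  obtain ⟨hjI, hjK⟩ := mem_sdiff.1 hj
  have hKB : K \ I.erase j = K \ I := by grind
  have h := smul_deltaVec_add_congr_of_bend (w := w) (J := insert j K) (B := I.erase j)
    (by rw [card_insert_of_notMem hjK, hK]) (by rw [card_erase_of_mem hjI, hI])
    (mem_insert_self j K) (notMem_erase j I)
  rw [erase_insert hjK, insert_erase hjI, hKB] at h
  have hrest := ModCongr.sum_congr_zero (K \ I) fun i hi =>
    (hexch i hi).smul_congr_zero (w ((insert j K).erase i))
  have hsplit := (ModCongr.refl (r := WedgeBendRel n d w) (w K • deltaVec S n d I)).add hrest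
  rw [add_zero] at hsplit
  exact ModCongr.congr_zero_of_smul hwK (hsplit.symm.trans (h.trans hrest))

theorem deltaVec_congr_zero_of_weight_eq_zero {K : Finset (Fin n)} (hK : K.card = d)
    (hwK : w K ≠ 0) (I : Finset (Fin n)) (hI : I.card = d) (hwI : w I = 0) :
    Cng (deltaVec S n d I) 0 := by
  refine induction_on_exchange (K := K) (p := fun I => w I = 0 → Cng (deltaVec S n d I) 0)
    (fun h => absurd h hwK) (fun I hI j hj ih hwI => ?_) I (hI.trans hK.symm) hwI
  by_cases hnz : ∃ i ∈ K \ I, w (insert i (I.erase j)) ≠ 0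
  · obtain ⟨i, hi, hw⟩ := hnz
    exact deltaVec_congr_zero_of_exchange_ne_zero (hI.trans hK) (mem_sdiff.1 hj).1
      (mem_sdiff.1 hi).2 hwI hw
  · push Not at hnz
    exact deltaVec_congr_zero_of_exchanges (hI.trans hK) hK hwK hj fun i hi => ih i hi (hnz i hi)

theorem deltaVec_congr_zero_of_congr_zero_of_weight_ne_zero {K : Finset (Fin n)}
    (hK : K.card = d) (hwK : w K ≠ 0) (h0 : Cng (deltaVec S n d K) 0)
    (I : Finset (Fin n)) (hI : I.card = d) : Cng (deltaVec S n d I) 0 :=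
  induction_on_exchange (K := K) (p := fun I => Cng (deltaVec S n d I) 0) h0
    (fun _ hI _ hj ih => deltaVec_congr_zero_of_exchanges (hI.trans hK) hK hwK hj ih)
    I (hI.trans hK.symm)

end WedgeBend

theorem vanishing_in_top_wedge_Qw_general {S : Type*} [Semifield S]
    (n d : ℕ) (w : Finset (Fin n) → S)
    (hw : ∃ I : Finset (Fin n), I.card = d ∧ w I ≠ 0) :
    (∀ I : Finset (Fin n), I.card = d → w I = 0 →
        ModCongr S (WedgeBendRel n d w) (deltaVec S n d I) 0)
    ∧ ((∃ J : Finset (Fin n), J.card = d ∧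
          ¬ ModCongr S (WedgeBendRel n d w) (deltaVec S n d J) 0) →
        ∀ I : Finset (Fin n), I.card = d →
          ModCongr S (WedgeBendRel n d w) (deltaVec S n d I) 0 → w I = 0) := by
  obtain ⟨K, hK, hwK⟩ := hw
  refine ⟨deltaVec_congr_zero_of_weight_eq_zero hK hwK, ?_⟩
  rintro ⟨J, hJ, hJ0⟩ I hI hI0
  by_contra hwI
  exact hJ0 (deltaVec_congr_zero_of_congr_zero_of_weight_ne_zero hI hwI hI0 J hJ)

/-- vanishing lemma: for nonzero `w ∈ ⋀^d S^n`, in `⋀^d Q_w` we have: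
if `w_I = 0` then `x_I = 0`; and conversely, provided some `x_J` is nonzero in
`⋀^d Q_w`, `x_I = 0` in `⋀^d Q_w` implies `w_I = 0`. -/
theorem vanishing_in_top_wedge_Qw {S : Type*} [Semifield S]
    (hid : ∀ s : S, s + s = s) (n d : ℕ) (w : Finset (Fin n) → S)
    (hw : ∃ I : Finset (Fin n), I.card = d ∧ w I ≠ 0) :
    (∀ I : Finset (Fin n), I.card = d → w I = 0 →
        ModCongr S (WedgeBendRel n d w) (deltaVec S n d I) 0)
    ∧ ((∃ J : Finset (Fin n), J.card = d ∧
          ¬ ModCongr S (WedgeBendRel n d w) (deltaVec S n d J) 0) →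
        ∀ I : Finset (Fin n), I.card = d →
          ModCongr S (WedgeBendRel n d w) (deltaVec S n d I) 0 → w I = 0) :=
  vanishing_in_top_wedge_Qw_general n d w hw
end

section
/- Over the Boolean semifield B = {0, 1} (with 1+1 = 1), an element w = Σ_{I ∈ 𝓘} e_I ∈ ⋀^d B^n satisfies the tropical Plücker relations if and only if the collection 𝓘 ⊆ C([n],d) is the set of bases of a rank d matroid on [n]. -/
/-!
Over `𝔹` a sum of `0/1` terms is `1` exactly when one of its terms is, so the Plücker relation
at `(A, B, p)` says: if `A - p` and `B + p` lie in `𝓘`, then so do `A - q` and `B + q` for some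
`q ≠ p`. With `A = I' + i`, `B = I - i`, `p = i` this is basis exchange. Conversely it is the
symmetric exchange property of the matroid with bases `𝓘`, applied to the bases `A - p` and
`B + p`.
-/

open Finset

theorem Matroid.IsBase.exists_symm_exchange {α : Type*} {M : Matroid α} {B₁ B₂ : Set α} {e : α}
    (hB₁ : M.IsBase B₁) (hB₂ : M.IsBase B₂) (he : e ∈ B₂ \ B₁) :
    ∃ f ∈ B₁ \ B₂, M.IsBase (insert e (B₁ \ {f})) ∧ M.IsBase (insert f (B₂ \ {e})) := by
  have heE : e ∈ M.E := hB₂.subset_ground he.1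
  have heK : e ∈ M.E \ M.closure (B₂ \ {e}) :=
    ⟨heE, hB₂.indep.notMem_closure_sdiff_of_mem he.1⟩
  -- `f` is a second common element of the fundamental circuit of `e` in `B₁` and of the
  -- cocircuit `E - cl(B₂ - e)`; circuits and cocircuits never meet in exactly one element.
  obtain ⟨f, ⟨hfC, hfE, hfcl⟩, hfe⟩ :=
    ((hB₁.fundCircuit_isCircuit heE he.2).isCocircuit_inter_nontrivial
      (hB₂.compl_closure_sdiff_singleton_isCocircuit he.1)
      ⟨e, M.mem_fundCircuit e B₁, heK⟩).exists_ne e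
  have hfB₁ : f ∈ B₁ := by simpa [hfe] using M.fundCircuit_subset_insert e B₁ hfC
  have hfB₂ : f ∉ B₂ := fun hf ↦
    hfcl (M.subset_closure _ (Set.sdiff_subset.trans hB₂.subset_ground) ⟨hf, hfe⟩)
  refine ⟨f, ⟨hfB₁, hfB₂⟩, hB₁.exchange_isBase_of_indep he.2 ?_,
    hB₂.exchange_base_of_notMem_closure he.1 hfcl⟩
  rw [Set.insert_sdiff_singleton_comm hfe.symm]
  exact (hB₁.indep.mem_fundCircuit_iff (by rwa [hB₁.closure_eq]) he.2).1 hfC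

theorem natCast_eq_ite_of_one_add_one {S : Type*} [AddMonoidWithOne S] (h : (1 : S) + 1 = 1)
    (k : ℕ) : (k : S) = if k = 0 then 0 else 1 := by
  induction k with
  | zero => simp
  | succ k ih => split_ifs at ih <;> simp_all

theorem sum_boole_eq_sum_boole_iff {S : Type*} [AddCommMonoidWithOne S] [NeZero (1 : S)]
    (h : (1 : S) + 1 = 1) {ι : Type*} (P : ι → Prop) [DecidablePred P] (s t : Finset ι) :
    ((∑ i ∈ s, if P i then (1 : S) else 0) = ∑ i ∈ t, if P i then 1 else 0) ↔
      ((∃ i ∈ s, P i) ↔ ∃ i ∈ t, P i) := by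
  have hsum (u : Finset ι) :
      (∑ i ∈ u, if P i then (1 : S) else 0) = if ∃ i ∈ u, P i then 1 else 0 := by
    simp only [sum_boole, natCast_eq_ite_of_one_add_one h, card_eq_zero,
      ← not_nonempty_iff_eq_empty, filter_nonempty_iff, ite_not]
  rw [hsum, hsum]
  by_cases hs : ∃ i ∈ s, P i <;> by_cases ht : ∃ i ∈ t, P i <;> simp [hs, ht]

section FinsetFamily

variable {α : Type*} [DecidableEq α]

def IsBoolPlucker (d : ℕ) (𝓘 : Finset (Finset α)) : Prop :=
  ∀ A B : Finset α, #A = d + 1 → #B = d - 1 → ∀ p ∈ A \ B, A.erase p ∈ 𝓘 → insert p B ∈ 𝓘 →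
    ∃ q ∈ (A \ B).erase p, A.erase q ∈ 𝓘 ∧ insert q B ∈ 𝓘

def BasisExchange (𝓘 : Finset (Finset α)) : Prop :=
  ∀ I ∈ 𝓘, ∀ I' ∈ 𝓘, ∀ i ∈ I \ I', ∃ j ∈ I' \ I, insert j (I.erase i) ∈ 𝓘

theorem tropPluckerRel_indicator_iff {S : Type*} [Semifield S] (h : (1 : S) + 1 = 1) (n d : ℕ)
    (𝓘 : Finset (Finset (Fin n))) :
    TropPluckerRel n d (fun I ↦ if I ∈ 𝓘 then (1 : S) else 0) ↔ IsBoolPlucker d 𝓘 := by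
  simp only [TropPluckerRel, IsBoolPlucker, ite_zero_mul_ite_zero, mul_one,
    sum_boole_eq_sum_boole_iff h]
  refine forall₄_congr fun A B _ _ ↦ forall₂_congr fun p hp ↦ ⟨fun h hA hB ↦ ?_, fun h ↦ ?_⟩
  · exact h.1 ⟨p, hp, hA, hB⟩
  refine ⟨fun ⟨i, hi, hAi, hBi⟩ ↦ ?_, fun ⟨i, hi, hQ⟩ ↦ ⟨i, mem_of_mem_erase hi, hQ⟩⟩
  obtain rfl | hip := eq_or_ne i p
  · exact h hAi hBi
  · exact ⟨i, mem_erase.2 ⟨hip, hi⟩, hAi, hBi⟩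

namespace BasisExchange

variable {𝓘 : Finset (Finset α)}

theorem exchangeProperty (hex : BasisExchange 𝓘) :
    Matroid.ExchangeProperty fun B : Set α ↦ ∃ J ∈ 𝓘, (J : Set α) = B := by
  rintro _ _ ⟨I, hI, rfl⟩ ⟨J, hJ, rfl⟩ i hi
  obtain ⟨j, hj, hjI⟩ := hex I hI J hJ i (by simpa using hi)
  exact ⟨j, by simpa using hj, _, hjI, by simp⟩

def matroid (hex : BasisExchange 𝓘) (hne : 𝓘.Nonempty) : Matroid α :=
  Matroid.ofExistsFiniteIsBase Set.univ (fun B ↦ ∃ J ∈ 𝓘, (J : Set α) = B)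
    (hne.elim fun I hI ↦ ⟨I, ⟨I, hI, rfl⟩, I.finite_toSet⟩) hex.exchangeProperty
    fun _ _ ↦ Set.subset_univ _

theorem matroid_isBase_coe_iff (hex : BasisExchange 𝓘) (hne : 𝓘.Nonempty) {J : Finset α} :
    (hex.matroid hne).IsBase J ↔ J ∈ 𝓘 := by
  simp [matroid]

theorem exists_symm_exchange (hex : BasisExchange 𝓘) {I J : Finset α} (hI : I ∈ 𝓘) (hJ : J ∈ 𝓘)
    {p : α} (hp : p ∈ J \ I) :
    ∃ q ∈ I \ J, insert p (I.erase q) ∈ 𝓘 ∧ insert q (J.erase p) ∈ 𝓘 := by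
  have hbase (K : Finset α) := hex.matroid_isBase_coe_iff ⟨I, hI⟩ (J := K)
  obtain ⟨q, hq, hpI, hqJ⟩ :=
    ((hbase I).2 hI).exists_symm_exchange ((hbase J).2 hJ) (e := p) (by simpa using hp)
  rw [← coe_erase, ← coe_insert, hbase] at hpI hqJ
  exact ⟨q, by simpa using hq, hpI, hqJ⟩

theorem isBoolPlucker (hex : BasisExchange 𝓘) (d : ℕ) :
    IsBoolPlucker d 𝓘 := by
  intro A B _ _ p hp hAp hBp
  obtain ⟨q, hq, hqA, hqB⟩ := hex.exists_symm_exchange hAp hBp (p := p) (by simp)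
  obtain ⟨⟨hqp, hqA'⟩, hqB'⟩ : (q ≠ p ∧ q ∈ A) ∧ q ∉ insert p B := by simpa using hq
  refine ⟨q, mem_erase.2 ⟨hqp, mem_sdiff.2 ⟨hqA', fun h ↦ hqB' (mem_insert_of_mem h)⟩⟩, ?_, ?_⟩
  · rwa [erase_right_comm, insert_erase (mem_erase.2 ⟨hqp.symm, (mem_sdiff.1 hp).1⟩)] at hqA
  · rwa [erase_insert (mem_sdiff.1 hp).2] at hqB

end BasisExchange

theorem IsBoolPlucker.basisExchange {d : ℕ} {𝓘 : Finset (Finset α)} (hpl : IsBoolPlucker d 𝓘)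
    (hcard : ∀ I ∈ 𝓘, #I = d) : BasisExchange 𝓘 := by
  intro I hI J hJ i hi
  obtain ⟨hiI, hiJ⟩ := mem_sdiff.1 hi
  obtain ⟨q, hq, -, hqI⟩ := hpl (insert i J) (I.erase i)
    (by rw [card_insert_of_notMem hiJ, hcard J hJ]) (by rw [card_erase_of_mem hiI, hcard I hI])
    i (by simp [hiJ]) (by rwa [erase_insert hiJ]) (by rwa [insert_erase hiI])
  obtain ⟨hqi, hqJ, hqI'⟩ : q ≠ i ∧ (q = i ∨ q ∈ J) ∧ (q ≠ i → q ∉ I) := by simpa using hq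
  exact ⟨q, mem_sdiff.2 ⟨hqJ.resolve_left hqi, hqI' hqi⟩, hqI⟩

end FinsetFamily

theorem boolean_plucker_iff_matroid_general {S : Type*} [Semifield S]
    (hid : ∀ s : S, s + s = s)
    (n d : ℕ) (𝓘 : Finset (Finset (Fin n))) (hcard : ∀ I ∈ 𝓘, I.card = d) :
    (𝓘.Nonempty ∧
        TropPluckerRel n d (fun I => if I ∈ 𝓘 then (1 : S) else 0))
      ↔ (𝓘.Nonempty ∧
          ∀ I ∈ 𝓘, ∀ I' ∈ 𝓘, ∀ i ∈ I \ I', ∃ j ∈ I' \ I,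
            insert j (I.erase i) ∈ 𝓘) := by
  rw [tropPluckerRel_indicator_iff (hid 1)]
  exact and_congr_right fun _ ↦
    ⟨fun hpl ↦ hpl.basisExchange hcard, (BasisExchange.isBoolPlucker · d)⟩

/-- over the Boolean semifield `𝔹 = {0,1}` (an idempotent semifield whose
only elements are `0` and `1`), the `{0,1}`-tensor `w = ∑_{I ∈ 𝓘} e_I` attached to a
collection `𝓘` of `d`-element subsets of `[n]` is a (nonzero) tropical Plücker vector
iff `𝓘` is the set of bases of a rank-`d` matroid on `[n]`, i.e. `𝓘` is nonempty and
satisfies the basis exchange axiom. -/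
theorem boolean_plucker_iff_matroid {S : Type*} [Semifield S]
    (hid : ∀ s : S, s + s = s) (htwo : ∀ s : S, s = 0 ∨ s = 1)
    (n d : ℕ) (𝓘 : Finset (Finset (Fin n))) (hcard : ∀ I ∈ 𝓘, I.card = d) :
    (𝓘.Nonempty ∧
        TropPluckerRel n d (fun I => if I ∈ 𝓘 then (1 : S) else 0))
      ↔ (𝓘.Nonempty ∧
          ∀ I ∈ 𝓘, ∀ I' ∈ 𝓘, ∀ i ∈ I \ I', ∃ j ∈ I' \ I,
            insert j (I.erase i) ∈ 𝓘) :=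
  boolean_plucker_iff_matroid_general hid n d 𝓘 hcard
end

section
/- Let S be a totally ordered idempotent semifield and w ∈ ⋀^d V a tropical Plücker vector. Then (L_w)^⊥ = L_{⋆w}, and consequently L_w^{⊥⊥} = L_w, where L^⊥ = ∩_{α∈L} tropker(α) denotes the orthogonal dual of a submodule L. -/
/-! For `f ∈ L_w^⊥`, testing `f` against the cocircuit vectors `β_K` of `w`, which lie in `L_w`
by the Plücker relations, yields exactly the circuit relations of `⋆w`.

Conversely let `v ∈ L_w`, `f ∈ L_{⋆w}` and `f_j v_j ≠ 0`. Among the bases `B ∋ j` of `w`, take one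
maximising first the number of zeros of `v` on `B` and then `w_B ∏_{l ∉ B, v_l ≠ 0} v_l`. The
circuit relations of `v` on `B + i` then give `w_{B-j+i} v_j ≤ w_B v_i` for every `i ∉ B`, and
feeding this into the circuit relation of `f` on `Bᶜ + j` yields `f_j v_j ≤ ∑_{i ∉ B} f_i v_i`.

Since `⋆w` is again a tropical Plücker vector and `⋆⋆w = w`, the same argument applied to `⋆w`
gives the double dual. -/

open Finset

/-- The orthogonal dual of a submodule `L ⊆ S^n`:
`L^⊥ = {f | every v ∈ L satisfies the bend relations of f}`. -/
def orthDual {S : Type*} [Semifield S] {n : ℕ} (L : Set (Fin n → S)) : Set (Fin n → S) :=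
  {f | ∀ v ∈ L, ∀ j : Fin n, ∑ i, f i * v i = ∑ i ∈ univ.erase j, f i * v i}

/-- The tropical linear space of a rank-`r` tensor `u`: the intersection of the tropical
hyperplanes of the circuit forms `∑_{i∈J} u_{J−i} x_i`, `J ∈ C([n],r+1)`. -/
def tropLinearSpace {S : Type*} [Semifield S] (n r : ℕ) (u : Finset (Fin n) → S) :
    Set (Fin n → S) :=
  {v | ∀ J : Finset (Fin n), J.card = r + 1 → ∀ j : Fin n,
    ∑ i ∈ J, u (J.erase i) * v i = ∑ i ∈ J.erase j, u (J.erase i) * v i}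

namespace MaxPlus

variable {S : Type*} [Semifield S] [LinearOrder S]

theorem add_eq_max (hord : ∀ a b : S, a ≤ b ↔ a + b = b) (a b : S) : a + b = max a b := by
  rcases le_total a b with h | h
  · rw [(hord a b).1 h, max_eq_right h]
  · rw [add_comm, (hord b a).1 h, max_eq_left h]

theorem zero_le (hord : ∀ a b : S, a ≤ b ↔ a + b = b) (a : S) : 0 ≤ a :=
  (hord 0 a).2 (zero_add a)

theorem eq_zero_of_le_zero (hord : ∀ a b : S, a ≤ b ↔ a + b = b) {a : S} (h : a ≤ 0) :
    a = 0 :=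
  h.antisymm (zero_le hord a)

theorem sum_le_iff (hord : ∀ a b : S, a ≤ b ↔ a + b = b) {ι : Type*} {s : Finset ι}
    {g : ι → S} {c : S} : ∑ i ∈ s, g i ≤ c ↔ ∀ i ∈ s, g i ≤ c := by
  classical
  induction s using Finset.induction_on with
  | empty => simpa using zero_le hord c
  | insert a s ha ih => rw [sum_insert ha, add_eq_max hord, max_le_iff, ih, forall_mem_insert]

theorem le_sum_of_mem (hord : ∀ a b : S, a ≤ b ↔ a + b = b) {ι : Type*} {s : Finset ι}
    {g : ι → S} {i : ι} (hi : i ∈ s) : g i ≤ ∑ i ∈ s, g i :=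
  (sum_le_iff hord).1 le_rfl i hi

theorem sum_le_sum (hord : ∀ a b : S, a ≤ b ↔ a + b = b) {ι : Type*} {s : Finset ι}
    {g h : ι → S} (hgh : ∀ i ∈ s, g i ≤ h i) : ∑ i ∈ s, g i ≤ ∑ i ∈ s, h i :=
  (sum_le_iff hord).2 fun i hi => (hgh i hi).trans (le_sum_of_mem hord hi)

theorem sum_le_sum_of_subset (hord : ∀ a b : S, a ≤ b ↔ a + b = b) {ι : Type*}
    {s t : Finset ι} (hst : s ⊆ t) (g : ι → S) : ∑ i ∈ s, g i ≤ ∑ i ∈ t, g i :=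
  (sum_le_iff hord).2 fun _ hi => le_sum_of_mem hord (hst hi)

theorem sum_eq_sum_erase_iff (hord : ∀ a b : S, a ≤ b ↔ a + b = b) {ι : Type*}
    [DecidableEq ι] {s : Finset ι} {g : ι → S} {j : ι} (hj : j ∈ s) :
    ∑ i ∈ s, g i = ∑ i ∈ s.erase j, g i ↔ g j ≤ ∑ i ∈ s.erase j, g i := by
  rw [← add_sum_erase s g hj, add_eq_max hord, max_eq_right_iff]

theorem mul_le_mul_right (hord : ∀ a b : S, a ≤ b ↔ a + b = b) {a b : S} (h : a ≤ b)
    (c : S) : a * c ≤ b * c :=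
  (hord _ _).2 (by rw [← add_mul, (hord a b).1 h])

theorem mul_le_mul_left (hord : ∀ a b : S, a ≤ b ↔ a + b = b) {a b : S} (h : a ≤ b)
    (c : S) : c * a ≤ c * b := by
  simpa only [mul_comm c] using mul_le_mul_right hord h c

theorem mul_le_mul_iff_right (hord : ∀ a b : S, a ≤ b ↔ a + b = b) {a b c : S}
    (hc : c ≠ 0) : a * c ≤ b * c ↔ a ≤ b := by
  refine ⟨fun h => ?_, fun h => mul_le_mul_right hord h c⟩
  simpa [mul_assoc, hc] using mul_le_mul_right hord h c⁻¹

end MaxPlus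

section HodgeStar

variable {S : Type*} {n : ℕ}

def hodgeStar (u : Finset (Fin n) → S) : Finset (Fin n) → S := fun K => u Kᶜ

@[simp]
theorem hodgeStar_apply (u : Finset (Fin n) → S) (K : Finset (Fin n)) :
    hodgeStar u K = u Kᶜ := rfl

@[simp]
theorem hodgeStar_hodgeStar (u : Finset (Fin n) → S) : hodgeStar (hodgeStar u) = u :=
  funext fun K => by simp

theorem exists_card_hodgeStar_ne_zero [Zero S] {r : ℕ} {u : Finset (Fin n) → S}
    (hu : ∃ I : Finset (Fin n), I.card = r ∧ u I ≠ 0) :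
    ∃ I : Finset (Fin n), I.card = n - r ∧ hodgeStar u I ≠ 0 := by
  obtain ⟨I, hI, huI⟩ := hu
  exact ⟨Iᶜ, by simp [card_compl, hI], by simpa using huI⟩

end HodgeStar

section TropicalLinearSpace

variable {S : Type*} [Semifield S] [LinearOrder S] {n : ℕ}

/-- `TropPluckerRel` in inequality form. Writing `B.card + 1 = r` rather than `B.card = r - 1`
makes the relations vacuous for `r = 0`, which lets them pass to the Hodge dual when `r = n`. -/
def TropPluckerIneq (n r : ℕ) (u : Finset (Fin n) → S) : Prop :=
  ∀ A B : Finset (Fin n), A.card = r + 1 → B.card + 1 = r → ∀ p ∈ A \ B,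
    u (A.erase p) * u (insert p B) ≤ ∑ i ∈ (A \ B).erase p, u (A.erase i) * u (insert i B)

theorem TropPluckerRel.tropPluckerIneq (hord : ∀ a b : S, a ≤ b ↔ a + b = b) {r : ℕ}
    {u : Finset (Fin n) → S} (hu : TropPluckerRel n r u) : TropPluckerIneq n r u :=
  fun A B hA hB p hp => (MaxPlus.sum_eq_sum_erase_iff hord hp).1 (hu A B hA (by omega) p hp)

theorem TropPluckerIneq.hodgeStar {r : ℕ} {u : Finset (Fin n) → S} (hr : r ≤ n)
    (hu : TropPluckerIneq n r u) : TropPluckerIneq n (n - r) (hodgeStar u) := by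
  intro A B hA hB p hp
  have hAn : A.card ≤ n := by simpa using A.card_le_univ
  have h := hu Bᶜ Aᶜ (by rw [card_compl, Fintype.card_fin]; omega)
    (by rw [card_compl, Fintype.card_fin]; omega) p (by rwa [compl_sdiff_compl])
  rw [compl_sdiff_compl] at h
  simpa [compl_insert, compl_erase, mul_comm] using h

theorem mem_tropLinearSpace_iff (hord : ∀ a b : S, a ≤ b ↔ a + b = b) {r : ℕ}
    {u : Finset (Fin n) → S} {v : Fin n → S} :
    v ∈ tropLinearSpace n r u ↔ ∀ J : Finset (Fin n), J.card = r + 1 → ∀ p ∈ J,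
      u (J.erase p) * v p ≤ ∑ i ∈ J.erase p, u (J.erase i) * v i := by
  refine forall₂_congr fun J _ => ⟨fun hv p hp => ?_, fun hv p => ?_⟩
  · exact (MaxPlus.sum_eq_sum_erase_iff hord hp).1 (hv p)
  · by_cases hp : p ∈ J
    · exact (MaxPlus.sum_eq_sum_erase_iff hord hp).2 (hv p hp)
    · rw [erase_eq_of_notMem hp]

theorem mem_orthDual_iff (hord : ∀ a b : S, a ≤ b ↔ a + b = b) {L : Set (Fin n → S)}
    {f : Fin n → S} :
    f ∈ orthDual L ↔ ∀ v ∈ L, ∀ j, f j * v j ≤ ∑ i ∈ univ.erase j, f i * v i :=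
  forall₂_congr fun _ _ => forall_congr' fun _ => MaxPlus.sum_eq_sum_erase_iff hord (mem_univ _)

def cocircuit (u : Finset (Fin n) → S) (K : Finset (Fin n)) : Fin n → S :=
  fun i => if i ∈ K then 0 else u (insert i K)

theorem cocircuit_mem_tropLinearSpace (hord : ∀ a b : S, a ≤ b ↔ a + b = b) {r : ℕ}
    {u : Finset (Fin n) → S} (hu : TropPluckerIneq n r u) {K : Finset (Fin n)}
    (hK : K.card + 1 = r) : cocircuit u K ∈ tropLinearSpace n r u := by
  refine (mem_tropLinearSpace_iff hord).2 fun A hA p hp => ?_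
  by_cases hpK : p ∈ K
  · simpa [cocircuit, hpK] using MaxPlus.zero_le hord _
  have hsum : ∑ i ∈ A.erase p, u (A.erase i) * cocircuit u K i
      = ∑ i ∈ (A \ K).erase p, u (A.erase i) * u (insert i K) := by
    simp only [cocircuit, mul_ite, mul_zero, sum_ite, sum_const_zero, zero_add]
    congr 1
    ext i
    simp only [mem_filter, mem_erase, mem_sdiff]
    tauto
  calc u (A.erase p) * cocircuit u K p = u (A.erase p) * u (insert p K) := by simp [cocircuit, hpK]
    _ ≤ _ := hu A K hA hK p (mem_sdiff.2 ⟨hp, hpK⟩)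
    _ = _ := hsum.symm

end TropicalLinearSpace

section DominatingBasis

variable {S : Type*} [Semifield S] [LinearOrder S] {n r : ℕ} {u : Finset (Fin n) → S}
  {v : Fin n → S} {j : Fin n}

def basisWeight (u : Finset (Fin n) → S) (v : Fin n → S) (B : Finset (Fin n)) : S :=
  u B * ∏ l ∈ Bᶜ, if v l = 0 then 1 else v l

theorem basisWeight_erase {J : Finset (Fin n)} {l : Fin n} (hl : l ∈ J) (hvl : v l ≠ 0) :
    basisWeight u v (J.erase l) = u (J.erase l) * v l * ∏ k ∈ Jᶜ, if v k = 0 then 1 else v k := by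
  rw [basisWeight, compl_erase, prod_insert (by simpa using hl), if_neg hvl, mul_assoc]

theorem exists_card_eq_mem_ne_zero (hord : ∀ a b : S, a ≤ b ↔ a + b = b)
    (hv : v ∈ tropLinearSpace n r u) (hu : ∃ I : Finset (Fin n), I.card = r ∧ u I ≠ 0)
    (hvj : v j ≠ 0) : ∃ B : Finset (Fin n), B.card = r ∧ j ∈ B ∧ u B ≠ 0 := by
  obtain ⟨I, hI, huI⟩ := hu
  by_contra! hloop
  have hjI : j ∉ I := fun hj => huI (hloop I hI hj)
  have hbend := (mem_tropLinearSpace_iff hord).1 hv (insert j I)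
    (by rw [card_insert_of_notMem hjI, hI]) j (mem_insert_self j I)
  have hzero : ∑ i ∈ I, u ((insert j I).erase i) * v i = 0 := by
    refine sum_eq_zero fun i hi => ?_
    have hij : i ≠ j := ne_of_mem_of_not_mem hi hjI
    have hr : 0 < r := hI ▸ card_pos.2 ⟨i, hi⟩
    have hcard : (insert j (I.erase i)).card = r := by
      rw [card_insert_of_notMem (fun h => hjI (mem_of_mem_erase h)), card_erase_of_mem hi, hI]
      omega
    rw [erase_insert_of_ne hij.symm, hloop _ hcard (mem_insert_self j _), zero_mul]
  rw [erase_insert hjI, hzero] at hbend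
  exact mul_ne_zero huI hvj (MaxPlus.eq_zero_of_le_zero hord hbend)

theorem exchange_eq_zero_of_max_card_zeros (hord : ∀ a b : S, a ≤ b ↔ a + b = b)
    (hv : v ∈ tropLinearSpace n r u) (hvj : v j ≠ 0) {B : Finset (Fin n)} (hB : B.card = r)
    (hjB : j ∈ B) (hmax : ∀ B' : Finset (Fin n), B'.card = r → j ∈ B' → u B' ≠ 0 →
      #{l ∈ B' | v l = 0} ≤ #{l ∈ B | v l = 0})
    {i : Fin n} (hi : i ∉ B) (hvi : v i = 0) : u (insert i (B.erase j)) = 0 := by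
  by_contra hne
  have hij : i ≠ j := fun h => hi (h ▸ hjB)
  have hbend := (mem_tropLinearSpace_iff hord).1 hv (insert i B)
    (by rw [card_insert_of_notMem hi, hB]) j (mem_insert_of_mem hjB)
  rw [erase_insert_of_ne hij] at hbend
  have hsum : ∑ l ∈ insert i (B.erase j), u ((insert i B).erase l) * v l ≠ 0 := fun h0 =>
    mul_ne_zero hne hvj (MaxPlus.eq_zero_of_le_zero hord (h0 ▸ hbend))
  obtain ⟨l, hl, hterm⟩ := exists_ne_zero_of_sum_ne_zero hsum
  have hvl : v l ≠ 0 := right_ne_zero_of_mul hterm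
  have hlB : l ∈ B.erase j := by
    rcases mem_insert.1 hl with rfl | hl
    · exact absurd hvi hvl
    · exact hl
  -- exchanging `l` for `i` would produce a basis through `j` with one more zero of `v`
  have hcard := hmax ((insert i B).erase l)
    (by rw [card_erase_of_mem (mem_insert_of_mem (mem_of_mem_erase hlB)),
      card_insert_of_notMem hi, hB]; rfl)
    (mem_erase.2 ⟨(ne_of_mem_erase hlB).symm, mem_insert_of_mem hjB⟩) (left_ne_zero_of_mul hterm)
  rw [filter_erase, erase_eq_of_notMem (by simp [hvl]), filter_insert, if_pos hvi,
    card_insert_of_notMem (by simp [hi])] at hcard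
  omega

theorem exchange_mul_le_of_max_basisWeight (hord : ∀ a b : S, a ≤ b ↔ a + b = b)
    (hv : v ∈ tropLinearSpace n r u) {B : Finset (Fin n)} (hB : B.card = r) (hjB : j ∈ B)
    (hmax : ∀ B' : Finset (Fin n), B'.card = r → j ∈ B' → u B' ≠ 0 →
      #{l ∈ B' | v l = 0} = #{l ∈ B | v l = 0} → basisWeight u v B' ≤ basisWeight u v B)
    {i : Fin n} (hi : i ∉ B) (hvi : v i ≠ 0) : u (insert i (B.erase j)) * v j ≤ u B * v i := by
  have hij : i ≠ j := fun h => hi (h ▸ hjB)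
  have hJi : (insert i B).erase i = B := erase_insert hi
  have hbend := (mem_tropLinearSpace_iff hord).1 hv (insert i B)
    (by rw [card_insert_of_notMem hi, hB]) j (mem_insert_of_mem hjB)
  rw [erase_insert_of_ne hij] at hbend
  refine hbend.trans ((MaxPlus.sum_le_iff hord).2 fun l hl => ?_)
  rcases mem_insert.1 hl with rfl | hlB
  · rw [hJi]
  by_cases h0 : u ((insert i B).erase l) * v l = 0
  · exact h0 ▸ MaxPlus.zero_le hord _
  have hvl : v l ≠ 0 := right_ne_zero_of_mul h0
  have hlJ : l ∈ insert i B := mem_insert_of_mem (mem_of_mem_erase hlB)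
  have hzeros : ∀ k, v k ≠ 0 →
      #{m ∈ (insert i B).erase k | v m = 0} = #{m ∈ insert i B | v m = 0} :=
    fun k hvk => by rw [filter_erase, erase_eq_of_notMem (by simp [hvk])]
  have hle := hmax ((insert i B).erase l)
    (by rw [card_erase_of_mem hlJ, card_insert_of_notMem hi, hB]; rfl)
    (mem_erase.2 ⟨(ne_of_mem_erase hlB).symm, mem_insert_of_mem hjB⟩) (left_ne_zero_of_mul h0)
    (by rw [hzeros l hvl, ← hzeros i hvi, hJi])
  have hwB := basisWeight_erase (u := u) (mem_insert_self i B) hvi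
  rw [hJi] at hwB
  rw [basisWeight_erase hlJ hvl, hwB] at hle
  exact (MaxPlus.mul_le_mul_iff_right hord (prod_ne_zero_iff.2 fun k _ => by
    split_ifs with hk <;> simp [hk])).1 hle

/-- The basis is chosen to maximise, lexicographically, the number of zeros of `v` on it and then
its `basisWeight`. -/
theorem exists_dominating_basis (hord : ∀ a b : S, a ≤ b ↔ a + b = b)
    (hv : v ∈ tropLinearSpace n r u) (hu : ∃ I : Finset (Fin n), I.card = r ∧ u I ≠ 0)
    (hvj : v j ≠ 0) : ∃ B : Finset (Fin n), B.card = r ∧ j ∈ B ∧ u B ≠ 0 ∧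
      ∀ i ∉ B, u (insert i (B.erase j)) * v j ≤ u B * v i := by
  obtain ⟨B₁, hB₁, hjB₁, huB₁⟩ := exists_card_eq_mem_ne_zero hord hv hu hvj
  obtain ⟨B, hBmem, hBmax⟩ := exists_max_image {B ∈ univ.powersetCard r | j ∈ B ∧ u B ≠ 0}
    (fun B => toLex (#{l ∈ B | v l = 0}, basisWeight u v B)) ⟨B₁, by simp [hB₁, hjB₁, huB₁]⟩
  simp only [mem_filter, mem_powersetCard, subset_univ, true_and] at hBmem
  obtain ⟨hB, hjB, huB⟩ := hBmem
  have hmax : ∀ B' : Finset (Fin n), B'.card = r → j ∈ B' → u B' ≠ 0 →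
      #{l ∈ B' | v l = 0} < #{l ∈ B | v l = 0} ∨ #{l ∈ B' | v l = 0} = #{l ∈ B | v l = 0} ∧
        basisWeight u v B' ≤ basisWeight u v B :=
    fun B' h₁ h₂ h₃ => Prod.Lex.toLex_le_toLex.1 (hBmax B' (by simp [h₁, h₂, h₃]))
  refine ⟨B, hB, hjB, huB, fun i hi => ?_⟩
  by_cases hvi : v i = 0
  · rw [exchange_eq_zero_of_max_card_zeros hord hv hvj hB hjB ?_ hi hvi, zero_mul]
    · exact MaxPlus.zero_le hord _
    · exact fun B' h₁ h₂ h₃ => (hmax B' h₁ h₂ h₃).elim le_of_lt fun h => h.1.le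
  · refine exchange_mul_le_of_max_basisWeight hord hv hB hjB (fun B' h₁ h₂ h₃ h₄ => ?_) hi hvi
    exact ((hmax B' h₁ h₂ h₃).resolve_left h₄.not_lt).2

end DominatingBasis

section Duality

variable {S : Type*} [Semifield S] [LinearOrder S] {n r : ℕ} {u : Finset (Fin n) → S}

theorem mul_le_sum_erase_of_mem_tropLinearSpace (hord : ∀ a b : S, a ≤ b ↔ a + b = b)
    (hu : ∃ I : Finset (Fin n), I.card = r ∧ u I ≠ 0) {v f : Fin n → S}
    (hv : v ∈ tropLinearSpace n r u) (hf : f ∈ tropLinearSpace n (n - r) (hodgeStar u))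
    (j : Fin n) : f j * v j ≤ ∑ i ∈ univ.erase j, f i * v i := by
  by_cases hvj : v j = 0
  · simpa [hvj] using MaxPlus.zero_le hord _
  obtain ⟨B, hB, hjB, huB, hdom⟩ := exists_dominating_basis hord hv hu hvj
  have hBn : B.card ≤ n := by simpa using B.card_le_univ
  -- the circuit of `⋆u` supported on `Bᶜ ∪ {j}` is the fundamental cocircuit of `B` at `j`
  have hr : 0 < r := hB ▸ card_pos.2 ⟨j, hjB⟩
  have hbend := (mem_tropLinearSpace_iff hord).1 hf (B.erase j)ᶜ
    (by rw [card_compl, card_erase_of_mem hjB, Fintype.card_fin]; omega) j (by simp)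
  have hsupp : (B.erase j)ᶜ.erase j = Bᶜ := by simp [hjB]
  have hcompl : ∀ i, ((B.erase j)ᶜ.erase i)ᶜ = insert i (B.erase j) := fun i => by
    rw [compl_erase, compl_compl]
  simp only [hodgeStar_apply, hcompl, hsupp, compl_compl] at hbend
  have key : f j * v j * u B ≤ (∑ i ∈ Bᶜ, f i * v i) * u B :=
    calc f j * v j * u B = u B * f j * v j := by ring
      _ ≤ (∑ i ∈ Bᶜ, u (insert i (B.erase j)) * f i) * v j := MaxPlus.mul_le_mul_right hord hbend _
      _ = ∑ i ∈ Bᶜ, f i * (u (insert i (B.erase j)) * v j) := by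
        rw [sum_mul]; exact sum_congr rfl fun _ _ => by ring
      _ ≤ ∑ i ∈ Bᶜ, f i * (u B * v i) :=
        MaxPlus.sum_le_sum hord fun i hi =>
          MaxPlus.mul_le_mul_left hord (hdom i (mem_compl.1 hi)) _
      _ = (∑ i ∈ Bᶜ, f i * v i) * u B := by
        rw [sum_mul]; exact sum_congr rfl fun _ _ => by ring
  exact ((MaxPlus.mul_le_mul_iff_right hord huB).1 key).trans
    (MaxPlus.sum_le_sum_of_subset hord
      (fun i hi => mem_erase.2 ⟨fun h => mem_compl.1 hi (h ▸ hjB), mem_univ i⟩) _)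

theorem tropLinearSpace_hodgeStar_subset_orthDual (hord : ∀ a b : S, a ≤ b ↔ a + b = b)
    (hu : ∃ I : Finset (Fin n), I.card = r ∧ u I ≠ 0) :
    tropLinearSpace n (n - r) (hodgeStar u) ⊆ orthDual (tropLinearSpace n r u) :=
  fun _ hf => (mem_orthDual_iff hord).2 fun _ hv =>
    mul_le_sum_erase_of_mem_tropLinearSpace hord hu hv hf

theorem orthDual_subset_tropLinearSpace_hodgeStar (hord : ∀ a b : S, a ≤ b ↔ a + b = b)
    (hr : r ≤ n) (hu : TropPluckerIneq n r u) :
    orthDual (tropLinearSpace n r u) ⊆ tropLinearSpace n (n - r) (hodgeStar u) := by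
  intro f hf
  refine (mem_tropLinearSpace_iff hord).2 fun J hJ p hp => ?_
  have hJn : J.card ≤ n := by simpa using J.card_le_univ
  have hβ := cocircuit_mem_tropLinearSpace hord hu (K := Jᶜ)
    (by rw [card_compl, Fintype.card_fin]; omega)
  have h := (mem_orthDual_iff hord).1 hf _ hβ p
  have hsum : ∑ i ∈ univ.erase p, f i * cocircuit u Jᶜ i
      = ∑ i ∈ J.erase p, hodgeStar u (J.erase i) * f i := by
    simp only [cocircuit, mem_compl, mul_ite, mul_zero, ite_not, ← sum_filter]
    refine sum_congr (by ext; simp [and_comm]) fun i _ => by simp [compl_erase, mul_comm]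
  simpa [cocircuit, hp, hsum, compl_erase, mul_comm] using h

theorem orthDual_tropLinearSpace_eq_hodgeStar (hord : ∀ a b : S, a ≤ b ↔ a + b = b)
    (hu : ∃ I : Finset (Fin n), I.card = r ∧ u I ≠ 0) (hpl : TropPluckerIneq n r u) :
    orthDual (tropLinearSpace n r u) = tropLinearSpace n (n - r) (hodgeStar u) := by
  have hr : r ≤ n := by
    obtain ⟨I, hI, -⟩ := hu
    simpa [hI] using I.card_le_univ
  exact (orthDual_subset_tropLinearSpace_hodgeStar hord hr hpl).antisymm
    (tropLinearSpace_hodgeStar_subset_orthDual hord hu)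

end Duality

theorem orthDual_tropLinearSpace_general {S : Type*} [Semifield S] [LinearOrder S]
    (hord : ∀ a b : S, a ≤ b ↔ a + b = b)
    (n d : ℕ) (w : Finset (Fin n) → S)
    (hw : ∃ I : Finset (Fin n), I.card = d ∧ w I ≠ 0)
    (hpl : TropPluckerRel n d w) :
    orthDual (tropLinearSpace n d w)
        = tropLinearSpace n (n - d) (fun K => w (univ \ K))
    ∧ orthDual (orthDual (tropLinearSpace n d w)) = tropLinearSpace n d w := by
  have hdn : d ≤ n := by
    obtain ⟨I, hI, -⟩ := hw
    simpa [hI] using I.card_le_univ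
  have hstar : (fun K => w (univ \ K)) = hodgeStar w := by
    funext K
    rw [hodgeStar_apply, compl_eq_univ_sdiff]
  have hpl' := hpl.tropPluckerIneq hord
  have hdual := orthDual_tropLinearSpace_eq_hodgeStar hord hw hpl'
  have hbidual := orthDual_tropLinearSpace_eq_hodgeStar hord (exists_card_hodgeStar_ne_zero hw)
    (hpl'.hodgeStar hdn)
  rw [hodgeStar_hodgeStar, Nat.sub_sub_self hdn] at hbidual
  rw [hstar]
  exact ⟨hdual, hdual ▸ hbidual⟩

/-- over a totally ordered idempotent semifield, for a tropical Plücker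
vector `w`: `(L_w)^⊥ = L_{⋆w}` and consequently `L_w^{⊥⊥} = L_w`, where
`(⋆w)_K = w_{K^c}`. -/
theorem orthDual_tropLinearSpace {S : Type*} [Semifield S] [LinearOrder S]
    (hid : ∀ s : S, s + s = s) (hord : ∀ a b : S, a ≤ b ↔ a + b = b)
    (n d : ℕ) (w : Finset (Fin n) → S)
    (hw : ∃ I : Finset (Fin n), I.card = d ∧ w I ≠ 0)
    (hpl : TropPluckerRel n d w) :
    orthDual (tropLinearSpace n d w)
        = tropLinearSpace n (n - d) (fun K => w (univ \ K))
    ∧ orthDual (orthDual (tropLinearSpace n d w)) = tropLinearSpace n d w :=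
  orthDual_tropLinearSpace_general hord n d w hw hpl
end

section
/- Let S be a totally ordered idempotent semifield and w ∈ ⋀^d V a tropical Plücker vector. Then the natural map ⋀^{d−1} Q_w → Q_w^∨ = L_w, induced by the pairing ⋀^{d−1}Q_w × ⋀^1 Q_w → ⋀^d Q_w ≅ S, is surjective. Concretely, the image of x_I (I ∈ C([n],d−1)) is the vector Σ_j (w_{I+j}/w_K) e_j ∈ V, a scalar multiple of the cocircuit vector β_I, where x_K is a fixed generator of ⋀^d Q_w ≅ S with w_K ≠ 0. -/
/-!
Over `S` addition is `max`. For `v ∈ L_w` and each `j` with `v j ≠ 0` there is a `(d-1)`-set `I`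
such that the multiple `(v j / w (I + j)) • β_I` of the cocircuit vector lies below `v` and agrees
with it at `j`; summing these multiples, i.e. taking their maximum, gives back `v`.
To find `I`, maximise over the `I` with `w (I + j) ≠ 0` first the number of zeros of `v` on `I`,
then `w (I + j) / ∏_{i ∈ I, v i ≠ 0} v i`. If some `j'` violated the bound, the maximum in the
kernel relation on `I + j + j'` would be attained at a second place `t ∈ I`, and the exchange
`I - t + j'` would increase this potential.
-/

open Finset

def IsTropicalOrder (S : Type*) [Add S] [LE S] : Prop :=
  ∀ a b : S, a ≤ b ↔ a + b = b

namespace IsTropicalOrder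

variable {S ι : Type*} [LinearOrder S]

section AddCommMonoid

variable [AddCommMonoid S]

theorem zero_le (hord : IsTropicalOrder S) (a : S) : 0 ≤ a :=
  (hord 0 a).2 (zero_add a)

theorem add_eq_max (hord : IsTropicalOrder S) (a b : S) : a + b = max a b := by
  rcases le_total a b with h | h
  · rw [max_eq_right h, (hord a b).1 h]
  · rw [max_eq_left h, add_comm, (hord b a).1 h]

theorem sum_eq_sup' (hord : IsTropicalOrder S) {s : Finset ι} (hs : s.Nonempty) (f : ι → S) :
    ∑ i ∈ s, f i = s.sup' hs f := by
  induction hs using Finset.Nonempty.cons_induction with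
  | singleton a => simp
  | cons a s ha hs ih => rw [sum_cons, sup'_cons hs, ih, hord.add_eq_max]

theorem sum_le (hord : IsTropicalOrder S) {s : Finset ι} {f : ι → S} {c : S}
    (h : ∀ i ∈ s, f i ≤ c) : ∑ i ∈ s, f i ≤ c := by
  rcases s.eq_empty_or_nonempty with rfl | hs
  · simpa using hord.zero_le c
  · rw [hord.sum_eq_sup' hs]
    exact sup'_le hs f h

theorem le_sum (hord : IsTropicalOrder S) {s : Finset ι} (f : ι → S) {i : ι} (hi : i ∈ s) :
    f i ≤ ∑ j ∈ s, f j := by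
  rw [hord.sum_eq_sup' ⟨i, hi⟩]
  exact le_sup' f hi

end AddCommMonoid

theorem mul_le_mul_right [Semiring S] (hord : IsTropicalOrder S) {a b : S} (h : a ≤ b) (c : S) :
    a * c ≤ b * c := by
  rw [hord] at h ⊢
  rw [← add_mul, h]

theorem mul_lt_mul_right [Semiring S] [IsRightCancelMulZero S] (hord : IsTropicalOrder S)
    {a b c : S} (h : a < b) (hc : c ≠ 0) : a * c < b * c :=
  (hord.mul_le_mul_right h.le c).lt_of_ne fun he => h.ne (mul_right_cancel₀ hc he)

end IsTropicalOrder

/-- `v ∈ L_w = tropker(− ∧ w)`. -/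
def MemTropKer {ι S : Type*} [DecidableEq ι] [Semiring S] (d : ℕ) (w : Finset ι → S) (v : ι → S) :
    Prop :=
  ∀ J : Finset ι, J.card = d + 1 → ∀ j : ι,
    ∑ i ∈ J, w (J.erase i) * v i = ∑ i ∈ J.erase j, w (J.erase i) * v i

namespace MemTropKer

variable {ι S : Type*} [DecidableEq ι] [CommSemiring S] [LinearOrder S] {d : ℕ}
  {w : Finset ι → S} {v : ι → S}

theorem term_le_sum_erase (hord : IsTropicalOrder S) (hv : MemTropKer d w v) {J : Finset ι}
    (hJ : J.card = d + 1) {j : ι} (hj : j ∈ J) :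
    w (J.erase j) * v j ≤ ∑ i ∈ J.erase j, w (J.erase i) * v i :=
  (hord.le_sum (fun i => w (J.erase i) * v i) hj).trans_eq (hv J hJ j)

theorem exists_le_term (hord : IsTropicalOrder S) (hv : MemTropKer d w v) {J : Finset ι}
    (hJ : J.card = d + 1) {j : ι} (hj : j ∈ J) (hne : (J.erase j).Nonempty) :
    ∃ t ∈ J.erase j, w (J.erase j) * v j ≤ w (J.erase t) * v t := by
  obtain ⟨t, ht, hmax⟩ := exists_mem_eq_sup' hne fun i => w (J.erase i) * v i
  refine ⟨t, ht, ?_⟩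
  rw [← hmax, ← hord.sum_eq_sup']
  exact hv.term_le_sum_erase hord hJ hj

theorem exists_basis_through [NoZeroDivisors S] (hord : IsTropicalOrder S)
    (hv : MemTropKer d w v) {K : Finset ι} (hK : K.card = d) (hwK : w K ≠ 0) {j : ι}
    (hvj : v j ≠ 0) : ∃ I : Finset ι, I.card + 1 = d ∧ j ∉ I ∧ w (insert j I) ≠ 0 := by
  by_contra! h
  have hzero : ∀ B : Finset ι, B.card = d → j ∈ B → w B = 0 := fun B hB hjB => by
    simpa [insert_erase hjB] using
      h (B.erase j) (by rw [card_erase_add_one hjB, hB]) (notMem_erase j B)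
  have hjK : j ∉ K := fun hjK => hwK (hzero K hK hjK)
  have hle := hv.term_le_sum_erase hord (J := insert j K)
    (by rw [card_insert_of_notMem hjK, hK]) (mem_insert_self j K)
  rw [erase_insert hjK, sum_eq_zero fun i hi => ?_] at hle
  · exact mul_ne_zero hwK hvj (le_antisymm hle (hord.zero_le _))
  · have hij : j ≠ i := fun hji => hjK (hji ▸ hi)
    rw [erase_insert_of_ne hij, hzero _ ?_ (mem_insert_self j _), zero_mul]
    rw [card_insert_of_notMem fun hj => hjK (mem_of_mem_erase hj), card_erase_of_mem hi, hK]
    have := card_pos.2 ⟨i, hi⟩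
    omega

theorem exists_exchange (hord : IsTropicalOrder S) (hv : MemTropKer d w v) {I : Finset ι}
    (hI : I.card + 1 = d) {j j' : ι} (hjI : j ∉ I) (hj'I : j' ∉ I)
    (hlt : v j' * w (insert j I) < v j * w (insert j' I)) :
    ∃ t ∈ I, v j' * w (insert j I) < v t * w (insert j (insert j' (I.erase t))) := by
  have hjj' : j' ≠ j := by rintro rfl; exact hlt.false
  have hjJ : j ∉ insert j' I := by simp [hjj'.symm, hjI]
  have hJ : (insert j (insert j' I)).card = d + 1 := by
    rw [card_insert_of_notMem hjJ, card_insert_of_notMem hj'I, hI]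
  obtain ⟨t, ht, hle⟩ := hv.exists_le_term hord hJ (mem_insert_self j _)
    (by rw [erase_insert hjJ]; exact insert_nonempty j' I)
  rw [erase_insert hjJ] at ht hle
  obtain rfl | htI := mem_insert.1 ht
  · rw [erase_insert_of_ne hjj'.symm, erase_insert hj'I] at hle
    exact (hlt.trans_le (by rwa [mul_comm (v j), mul_comm (v t)])).false.elim
  · have htj : j ≠ t := fun hjt => hjI (hjt ▸ htI)
    have htj' : j' ≠ t := fun hjt => hj'I (hjt ▸ htI)
    refine ⟨t, htI, hlt.trans_le ?_⟩
    rw [erase_insert_of_ne htj, erase_insert_of_ne htj'] at hle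
    rwa [mul_comm (v j), mul_comm (v t)]

end MemTropKer

section TightCocircuit

variable {ι S : Type*} [DecidableEq ι] [Semifield S] [LinearOrder S]

/-- The multiple `(v j / w (I + j)) • β_I` of the cocircuit vector `β_I` lies below `v` and
agrees with it at `j`. -/
def IsTightCocircuit (w : Finset ι → S) (v : ι → S) (I : Finset ι) (j : ι) : Prop :=
  j ∉ I ∧ w (insert j I) ≠ 0 ∧ ∀ j' ∉ I, v j * w (insert j' I) ≤ v j' * w (insert j I)

def exchangePotential (w : Finset ι → S) (v : ι → S) (j : ι) (I : Finset ι) : ℕ ×ₗ S :=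
  toLex (#{i ∈ I | v i = 0}, w (insert j I) / ∏ i ∈ I with v i ≠ 0, v i)

theorem exchangePotential_lt (hord : IsTropicalOrder S) {w : Finset ι → S} {v : ι → S}
    {I : Finset ι} {j j' t : ι} (htI : t ∈ I) (hj'I : j' ∉ I)
    (hlt : v j' * w (insert j I) < v t * w (insert j (insert j' (I.erase t)))) :
    exchangePotential w v j I < exchangePotential w v j (insert j' (I.erase t)) := by
  have hvt : v t ≠ 0 := by
    rintro h
    rw [h, zero_mul] at hlt
    exact (hord.zero_le _).not_gt hlt
  have hj'e : j' ∉ I.erase t := fun h => hj'I (mem_of_mem_erase h)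
  have hcount : #{i ∈ I.erase t | v i = 0} = #{i ∈ I | v i = 0} := by
    rw [filter_erase, erase_eq_of_notMem (by simp [hvt])]
  have hprod : ∏ i ∈ I with v i ≠ 0, v i = v t * ∏ i ∈ I.erase t with v i ≠ 0, v i := by
    rw [filter_erase, mul_prod_erase _ _ (mem_filter.2 ⟨htI, hvt⟩)]
  have hP : ∏ i ∈ I.erase t with v i ≠ 0, v i ≠ 0 :=
    prod_ne_zero_iff.2 fun i hi => (mem_filter.1 hi).2
  unfold exchangePotential
  rw [Prod.Lex.toLex_lt_toLex, filter_insert, filter_insert]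
  by_cases hvj' : v j' = 0
  · left
    rw [if_pos hvj', card_insert_of_notMem (by simp [hj'e]), hcount]
    exact Nat.lt_succ_self _
  · right
    rw [if_neg hvj', if_pos hvj']
    refine ⟨hcount.symm, ?_⟩
    dsimp only
    rw [prod_insert (by simp [hj'e]), hprod]
    have hc := mul_ne_zero (mul_ne_zero hvt hvj') hP
    calc _ = v j' * w (insert j I) * (v t * v j' * ∏ i ∈ I.erase t with v i ≠ 0, v i)⁻¹ := by
          field_simp
      _ < v t * w (insert j (insert j' (I.erase t))) *
          (v t * v j' * ∏ i ∈ I.erase t with v i ≠ 0, v i)⁻¹ :=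
        hord.mul_lt_mul_right hlt (inv_ne_zero hc)
      _ = _ := by field_simp

theorem MemTropKer.exists_isTightCocircuit [Fintype ι] (hord : IsTropicalOrder S) {d : ℕ}
    {w : Finset ι → S} {v : ι → S} (hv : MemTropKer d w v) {K : Finset ι} (hK : K.card = d)
    (hwK : w K ≠ 0) {j : ι} (hvj : v j ≠ 0) :
    ∃ I : Finset ι, I.card + 1 = d ∧ IsTightCocircuit w v I j := by
  obtain ⟨I₀, hI₀⟩ := hv.exists_basis_through hord hK hwK hvj
  obtain ⟨I, hI, hmax⟩ :=
    exists_max_image {I : Finset ι | I.card + 1 = d ∧ j ∉ I ∧ w (insert j I) ≠ 0}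
      (exchangePotential w v j) ⟨I₀, mem_filter.2 ⟨mem_univ _, hI₀⟩⟩
  obtain ⟨hIcard, hjI, hwI⟩ := (mem_filter.1 hI).2
  refine ⟨I, hIcard, hjI, hwI, fun j' hj'I => ?_⟩
  by_contra! hlt
  have hjj' : j ≠ j' := by rintro rfl; exact hlt.false
  obtain ⟨t, htI, hexch⟩ := hv.exists_exchange hord hIcard hjI hj'I hlt
  refine (exchangePotential_lt hord htI hj'I hexch).not_ge
    (hmax _ (mem_filter.2 ⟨mem_univ _, ?_, ?_, ?_⟩))
  · rw [card_insert_of_notMem fun h => hj'I (mem_of_mem_erase h), card_erase_add_one htI, hIcard]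
  · simp [hjj', hjI]
  · exact right_ne_zero_of_mul ((hord.zero_le _).trans_lt hexch).ne'

open Classical in
noncomputable def tightCoeff [Fintype ι] (w : Finset ι → S) (v : ι → S) (I : Finset ι) : S :=
  ∑ j with IsTightCocircuit w v I j, v j / w (insert j I)

variable [Fintype ι] {w : Finset ι → S} {v : ι → S} {I : Finset ι} {t : ι}

theorem tightCoeff_mul_le (hord : IsTropicalOrder S) (ht : t ∉ I) :
    tightCoeff w v I * w (insert t I) ≤ v t := by
  classical
  rw [tightCoeff, sum_mul]
  refine hord.sum_le fun j hj => ?_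
  obtain ⟨-, hwj, htight⟩ := (mem_filter.1 hj).2
  calc v j / w (insert j I) * w (insert t I) = v j * w (insert t I) * (w (insert j I))⁻¹ := by
        ring
    _ ≤ v t * w (insert j I) * (w (insert j I))⁻¹ := hord.mul_le_mul_right (htight t ht) _
    _ = v t := mul_inv_cancel_right₀ hwj _

theorem le_tightCoeff_mul (hord : IsTropicalOrder S) (h : IsTightCocircuit w v I t) :
    v t ≤ tightCoeff w v I * w (insert t I) := by
  classical
  calc v t = v t / w (insert t I) * w (insert t I) := (div_mul_cancel₀ _ h.2.1).symm
    _ ≤ _ := hord.mul_le_mul_right (hord.le_sum (fun j => v j / w (insert j I))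
      (mem_filter.2 ⟨mem_univ _, h⟩)) _

end TightCocircuit

theorem wedge_to_Lw_surjective_general {S : Type*} [Semifield S] [LinearOrder S]
    (hord : ∀ a b : S, a ≤ b ↔ a + b = b)
    (n d : ℕ) (w : Finset (Fin n) → S)
    (K : Finset (Fin n)) (hK : K.card = d) (hwK : w K ≠ 0)
    (v : Fin n → S)
    (hv : ∀ J : Finset (Fin n), J.card = d + 1 → ∀ j : Fin n,
      ∑ i ∈ J, w (J.erase i) * v i = ∑ i ∈ J.erase j, w (J.erase i) * v i) :
    ∃ m : {I : Finset (Fin n) // I.card = d - 1} → S,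
      v = fun j => ∑ I : {I : Finset (Fin n) // I.card = d - 1},
        m I * (if j ∉ I.1 then w (insert j I.1) / w K else 0) := by
  have hord : IsTropicalOrder S := hord
  refine ⟨fun I => tightCoeff w v I.1 * w K, funext fun t => le_antisymm ?_ ?_⟩ <;> dsimp only
  · rcases eq_or_ne (v t) 0 with hvt | hvt
    · rw [hvt]
      exact hord.zero_le _
    obtain ⟨I, hI, htight⟩ := MemTropKer.exists_isTightCocircuit hord hv hK hwK hvt
    calc v t ≤ tightCoeff w v I * w (insert t I) := le_tightCoeff_mul hord htight
      _ = tightCoeff w v I * w K * (if t ∉ I then w (insert t I) / w K else 0) := by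
        rw [if_pos htight.1]
        field_simp
      _ ≤ _ := hord.le_sum (fun I : {I : Finset (Fin n) // I.card = d - 1} =>
          tightCoeff w v I.1 * w K * (if t ∉ I.1 then w (insert t I.1) / w K else 0))
          (mem_univ (⟨I, by omega⟩ : {I : Finset (Fin n) // I.card = d - 1}))
  · refine hord.sum_le fun I _ => ?_
    split_ifs with ht
    · rw [mul_zero]
      exact hord.zero_le _
    · calc tightCoeff w v I.1 * w K * (w (insert t I.1) / w K)
            = tightCoeff w v I.1 * w (insert t I.1) := by field_simp
        _ ≤ v t := tightCoeff_mul_le hord ht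

/-- over a totally ordered idempotent semifield, for a tropical Plücker
vector `w` with `w_K ≠ 0` (`x_K` generating `⋀^d Q_w ≅ S`), the map
`⋀^{d−1} Q_w → Q_w^∨ = L_w` sending `x_I` to `u_I = ∑_j (w_{I+j}/w_K) e_j` (with
`u_I(j) = 0` for `j ∈ I`) is surjective: every `v ∈ L_w = tropker(−∧w)` is an
`S`-linear combination of the vectors `u_I`, `I ∈ C([n],d−1)`. -/
theorem wedge_to_Lw_surjective {S : Type*} [Semifield S] [LinearOrder S]
    (hid : ∀ s : S, s + s = s) (hord : ∀ a b : S, a ≤ b ↔ a + b = b)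
    (n d : ℕ) (hd : 1 ≤ d) (w : Finset (Fin n) → S)
    (hpl : TropPluckerRel n d w)
    (K : Finset (Fin n)) (hK : K.card = d) (hwK : w K ≠ 0)
    (v : Fin n → S)
    (hv : ∀ J : Finset (Fin n), J.card = d + 1 → ∀ j : Fin n,
      ∑ i ∈ J, w (J.erase i) * v i = ∑ i ∈ J.erase j, w (J.erase i) * v i) :
    ∃ m : {I : Finset (Fin n) // I.card = d - 1} → S,
      v = fun j => ∑ I : {I : Finset (Fin n) // I.card = d - 1},
        m I * (if j ∉ I.1 then w (insert j I.1) / w K else 0) :=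
  wedge_to_Lw_surjective_general hord n d w K hK hwK v hv
end
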